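/- arXiv:2310.02137 — 6 statements merged into one kernel-verified Lean document; each statement's English description precedes it below -/
import Mathlib

section
/- For every real number x ≥ 2, the sum of τ(v)² over 1 ≤ v ≤ x is O(x (log x)³), where τ is the divisor function. -/
/-!
`τ(v)²` counts the pairs `(a, b)` with `a ∣ v` and `b ∣ v`, i.e. with `lcm a b ∣ v`, so by double
counting `∑_{v ≤ N} τ(v)² = ∑_{a, b ≤ N} ⌊N / lcm a b⌋ ≤ N ∑_{a, b ≤ N} 1 / lcm a b`. With
`g = gcd a b` we have `lcm a b = g · (a / g) · (b / g)`, and `(a, b) ↦ (g, a / g, b / g)` is injective,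
so the last sum is at most `H_N³`; finally `H_⌊x⌋ ≤ 1 + log x ≤ 3 log x` for `x ≥ 2`.
-/

open Finset

namespace Nat

theorem lcm_eq_gcd_mul_div_gcd_mul_div_gcd (a b : ℕ) :
    lcm a b = gcd a b * (a / gcd a b) * (b / gcd a b) := by
  rw [Nat.mul_div_cancel' (gcd_dvd_left a b), lcm, Nat.mul_div_assoc a (gcd_dvd_right a b)]

theorem divisors_eq_filter_Icc_dvd {v N : ℕ} (hv : v ∈ Icc 1 N) :
    v.divisors = {a ∈ Icc 1 N | a ∣ v} := by
  rw [mem_Icc] at hv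
  ext a
  simp only [mem_divisors, mem_filter, mem_Icc]
  constructor
  · rintro ⟨hav, -⟩
    exact ⟨⟨pos_of_dvd_of_pos hav hv.1, (le_of_dvd hv.1 hav).trans hv.2⟩, hav⟩
  · rintro ⟨-, hav⟩
    exact ⟨hav, by omega⟩

theorem sum_card_divisors_sq_eq_sum_div_lcm (N : ℕ) :
    ∑ v ∈ Icc 1 N, #v.divisors ^ 2 = ∑ a ∈ Icc 1 N, ∑ b ∈ Icc 1 N, N / lcm a b := by
  calc ∑ v ∈ Icc 1 N, #v.divisors ^ 2
      = ∑ v ∈ Icc 1 N, #{p ∈ Icc 1 N ×ˢ Icc 1 N | p.1 ∣ v ∧ p.2 ∣ v} := by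
        refine sum_congr rfl fun v hv => ?_
        rw [filter_product (· ∣ v) (· ∣ v), card_product, divisors_eq_filter_Icc_dvd hv, sq]
    _ = ∑ p ∈ Icc 1 N ×ˢ Icc 1 N, #{v ∈ Icc 1 N | p.1 ∣ v ∧ p.2 ∣ v} :=
        sum_card_bipartiteAbove_eq_sum_card_bipartiteBelow _
    _ = ∑ a ∈ Icc 1 N, ∑ b ∈ Icc 1 N, N / lcm a b := by
        rw [sum_product]
        refine sum_congr rfl fun a _ => sum_congr rfl fun b _ => ?_
        simp_rw [← Nat.lcm_dvd_iff]
        exact Ioc_filter_dvd_card_eq_div N _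

theorem sum_inv_lcm_le_harmonic_pow_three (N : ℕ) :
    ∑ a ∈ Icc 1 N, ∑ b ∈ Icc 1 N, ((lcm a b : ℕ) : ℝ)⁻¹ ≤ (harmonic N : ℝ) ^ 3 := by
  set I := Icc 1 N
  let split : ℕ × ℕ → ℕ × ℕ × ℕ := fun p => (gcd p.1 p.2, p.1 / gcd p.1 p.2, p.2 / gcd p.1 p.2)
  let f : ℕ × ℕ × ℕ → ℝ := fun q => ((q.1 * q.2.1 * q.2.2 : ℕ) : ℝ)⁻¹
  have split_injOn : Set.InjOn split ↑(I ×ˢ I) := by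
    have recover : ∀ p : ℕ × ℕ, p = ((split p).1 * (split p).2.1, (split p).1 * (split p).2.2) :=
      fun p => by simp only [split, Nat.mul_div_cancel' (gcd_dvd_left _ _),
        Nat.mul_div_cancel' (gcd_dvd_right _ _)]
    intro p _ q _ h
    rw [recover p, recover q, h]
  have split_mem : ∀ p ∈ I ×ˢ I, split p ∈ I ×ˢ I ×ˢ I := by
    rintro ⟨a, b⟩ hp
    simp only [I, mem_product, mem_Icc] at hp ⊢
    have hg : 0 < gcd a b := gcd_pos_of_pos_left b hp.1.1
    have hga : gcd a b ≤ a := le_of_dvd hp.1.1 (gcd_dvd_left a b)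
    have hgb : gcd a b ≤ b := le_of_dvd hp.2.1 (gcd_dvd_right a b)
    exact ⟨⟨hg, hga.trans hp.1.2⟩, ⟨div_pos hga hg, (div_le_self a _).trans hp.1.2⟩,
      ⟨div_pos hgb hg, (div_le_self b _).trans hp.2.2⟩⟩
  calc ∑ a ∈ I, ∑ b ∈ I, ((lcm a b : ℕ) : ℝ)⁻¹
      = ∑ p ∈ I ×ˢ I, f (split p) := by
        simp only [sum_product, f, split, ← lcm_eq_gcd_mul_div_gcd_mul_div_gcd]
    _ = ∑ q ∈ (I ×ˢ I).image split, f q := (sum_image split_injOn).symm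
    _ ≤ ∑ q ∈ I ×ˢ I ×ˢ I, f q :=
        sum_le_sum_of_subset_of_nonneg (image_subset_iff.2 split_mem) fun _ _ _ => by positivity
    _ = (∑ k ∈ I, (k : ℝ)⁻¹) ^ 3 := by
        simp only [f, sum_product, cast_mul, mul_inv, mul_assoc]
        rw [pow_three, sum_mul_sum, sum_mul]
        simp only [mul_sum]
    _ = (harmonic N : ℝ) ^ 3 := by push_cast [harmonic_eq_sum_Icc]; rfl

theorem sum_card_divisors_sq_le (N : ℕ) :
    ∑ v ∈ Icc 1 N, (#v.divisors : ℝ) ^ 2 ≤ N * (harmonic N : ℝ) ^ 3 := by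
  calc ∑ v ∈ Icc 1 N, (#v.divisors : ℝ) ^ 2
      = ∑ a ∈ Icc 1 N, ∑ b ∈ Icc 1 N, ((N / lcm a b : ℕ) : ℝ) := by
        exact_mod_cast sum_card_divisors_sq_eq_sum_div_lcm N
    _ ≤ ∑ a ∈ Icc 1 N, ∑ b ∈ Icc 1 N, (N : ℝ) * ((lcm a b : ℕ) : ℝ)⁻¹ := by
        gcongr
        exact cast_div_le
    _ = N * ∑ a ∈ Icc 1 N, ∑ b ∈ Icc 1 N, ((lcm a b : ℕ) : ℝ)⁻¹ := by simp only [mul_sum]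
    _ ≤ N * (harmonic N : ℝ) ^ 3 := by gcongr; exact sum_inv_lcm_le_harmonic_pow_three N

end Nat

theorem harmonic_floor_le_three_mul_log {x : ℝ} (hx : 2 ≤ x) :
    (harmonic ⌊x⌋₊ : ℝ) ≤ 3 * Real.log x := by
  have h_log : Real.log 2 ≤ Real.log x := Real.log_le_log (by norm_num) hx
  linarith [harmonic_floor_le_one_add_log x (by linarith), Real.log_two_gt_d9]

/-- The sum of `τ(v)²` over `1 ≤ v ≤ x` is `O(x (log x)³)`,
with an absolute implied constant. -/
theorem sum_divisor_count_sq_le : ∃ C : ℝ, 0 < C ∧ ∀ x : ℝ, 2 ≤ x →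
    ∑ v ∈ Finset.Icc 1 ⌊x⌋₊, ((v.divisors.card : ℝ)) ^ 2 ≤ C * x * (Real.log x) ^ 3 := by
  refine ⟨27, by norm_num, fun x hx => ?_⟩
  calc ∑ v ∈ Icc 1 ⌊x⌋₊, (#v.divisors : ℝ) ^ 2
      ≤ ⌊x⌋₊ * (harmonic ⌊x⌋₊ : ℝ) ^ 3 := Nat.sum_card_divisors_sq_le _
    _ ≤ x * (3 * Real.log x) ^ 3 := by
        have h_floor : (⌊x⌋₊ : ℝ) ≤ x := Nat.floor_le (by linarith)
        have h_harmonic : (0 : ℝ) ≤ harmonic ⌊x⌋₊ := by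
          exact_mod_cast (harmonic_pos (Nat.floor_pos.2 (by linarith)).ne').le
        gcongr
        exact harmonic_floor_le_three_mul_log hx
    _ = 27 * x * Real.log x ^ 3 := by ring
end

section
/- Let d ≥ 2 and n ≥ 2. For every prime power p^r, the average of σ'(a; p^r) over a ∈ 𝔉 := {a ∈ (ℤ/p^rℤ)^N : gcd(a, p) = 1 coordinatewise-gcd with p^r equals 1} equals (1 − p^{−(N−1)}) / (1 − p^{−N}), where N = N_{d,n} = binomial(n+d, d); in particular it is 1 + O(p^{−(N−1)}). -/
/-- The index type for monomials of degree `d` in `n+1` variables; its cardinality is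
`N_{d,n} = binomial(n+d, d)`. -/
abbrev Mono (d n : ℕ) := {m : Fin (n + 1) → Fin (d + 1) // ∑ i, (m i : ℕ) = d}

/-- The singular series factor
`σ'(a; Q) = (Q / φ(Q)^{n+1}) · #{b ∈ ((ℤ/Qℤ)^×)^{n+1} : ⟨a, ν_{d,n}(b)⟩ ≡ 0 (mod Q)}`. -/
noncomputable def sigma' (d n Q : ℕ) (a : Mono d n → ZMod Q) : ℝ :=
  ((Q : ℝ) / (Nat.totient Q : ℝ) ^ (n + 1)) *
    Nat.card {b : Fin (n + 1) → (ZMod Q)ˣ //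
      ∑ m : Mono d n, a m * ∏ i, ((b i : ZMod Q)) ^ (m.1 i : ℕ) = 0}

/-!
Exchanging the two counts, the sum of `σ'(a; Q)` over `a ∈ 𝔉` is `Q / φ(Q)^{n+1}` times the
number of pairs `(a, b)` with `⟨a, ν(b)⟩ = 0`, and for each `b` the vector `c = ν(b)` consists
of units. In the hyperplane `⟨a, c⟩ = 0` all coordinates but one are free, and since
`ℤ/p^rℤ` is a local ring the remaining one is a non-unit as soon as the free ones are. With
`q = p^r` and `s = p^{r-1}` non-units, every `b` therefore has `q^{N-1} - s^{N-1}` solutions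
in `𝔉`, while `#𝔉 = q^N - s^N`; since `q = p s`, the quotient is
`(1 - p^{-(N-1)}) / (1 - p^{-N})`.
-/

theorem Nat.card_subtype_add_card_subtype_not {α : Type*} [Finite α] (p : α → Prop) :
    Nat.card {x // p x} + Nat.card {x // ¬p x} = Nat.card α := by
  classical
  have := Fintype.ofFinite α
  simp only [Nat.card_eq_fintype_card]
  rw [Fintype.card_subtype_compl]
  exact Nat.add_sub_of_le (Fintype.card_subtype_le p)

theorem sum_natCard_subtype_comm {α β : Type*} [Fintype α] [Fintype β] (R : α → β → Prop) :
    ∑ a, Nat.card {b // R a b} = ∑ b, Nat.card {a // R a b} := by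
  classical
  simp_rw [Nat.card_eq_fintype_card, Fintype.card_subtype, Finset.card_filter]
  exact Finset.sum_comm

section Units

variable (R : Type*) [Monoid R] [Finite R]

theorem card_nonunits_add_card_units :
    Nat.card {x : R // ¬IsUnit x} + Nat.card Rˣ = Nat.card R := by
  rw [Nat.card_congr (Equiv.ofInjective _ Units.val_injective), add_comm]
  exact Nat.card_subtype_add_card_subtype_not IsUnit

theorem card_exists_isUnit_add (ι : Type*) [Fintype ι] :
    Nat.card {a : ι → R // ∃ i, IsUnit (a i)} + Nat.card {x : R // ¬IsUnit x} ^ Fintype.card ι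
      = Nat.card R ^ Fintype.card ι := by
  have e : {a : ι → R // ¬∃ i, IsUnit (a i)} ≃ (ι → {x : R // ¬IsUnit x}) :=
    (Equiv.subtypeEquivRight fun _ => not_exists).trans
      (Equiv.subtypePiEquivPi (p := fun _ x => ¬IsUnit x))
  rw [← Nat.card_eq_fintype_card, ← Nat.card_fun, ← Nat.card_congr e, ← Nat.card_fun]
  exact Nat.card_subtype_add_card_subtype_not _

end Units

section Hyperplane

variable {R ι : Type*} [CommRing R] [Fintype ι] [DecidableEq ι] {c : ι → R} {i₀ : ι}

theorem sum_mul_eq_zero_iff_eq (hc : IsUnit (c i₀)) {a : ι → R} :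
    ∑ i, a i * c i = 0 ↔ a i₀ = ↑hc.unit⁻¹ * -∑ j : {i // i ≠ i₀}, a j * c j := by
  rw [Units.eq_inv_mul_iff_mul_eq, IsUnit.unit_spec, Fintype.sum_eq_add_sum_subtype_ne _ i₀,
    add_eq_zero_iff_eq_neg, mul_comm]

noncomputable def hyperplaneEquivPi (hc : IsUnit (c i₀)) :
    {a : ι → R // ∑ i, a i * c i = 0} ≃ ({i // i ≠ i₀} → R) where
  toFun a i := a.1 i
  invFun f := ⟨fun i => if h : i = i₀ then ↑hc.unit⁻¹ * -∑ j, f j * c j else f ⟨i, h⟩, by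
    rw [sum_mul_eq_zero_iff_eq hc, dif_pos rfl]
    exact congrArg _ (congrArg _ (Finset.sum_congr rfl fun j _ => by rw [dif_neg j.2]))⟩
  left_inv a := by
    ext i
    dsimp only
    split_ifs with h
    · subst h
      exact ((sum_mul_eq_zero_iff_eq hc).1 a.2).symm
    · rfl
  right_inv f := funext fun j => dif_neg j.2

variable [IsLocalRing R]

theorem not_isUnit_of_sum_mul_eq_zero (hc : IsUnit (c i₀)) {a : ι → R} (ha : ∑ i, a i * c i = 0)
    (h : ∀ j : {i // i ≠ i₀}, ¬IsUnit (a j)) : ¬IsUnit (a i₀) := by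
  rw [(sum_mul_eq_zero_iff_eq hc).1 ha, ← mem_nonunits_iff, ← IsLocalRing.mem_maximalIdeal]
  refine Ideal.mul_mem_left _ _ (neg_mem (Ideal.sum_mem _ fun j _ => Ideal.mul_mem_right _ _ ?_))
  exact (IsLocalRing.mem_maximalIdeal _).2 (h j)

theorem card_exists_isUnit_and_sum_mul_eq_zero_add [Finite R] (hc : IsUnit (c i₀)) :
    Nat.card {a : {a : ι → R // ∃ i, IsUnit (a i)} // ∑ i, a.1 i * c i = 0}
        + Nat.card {x : R // ¬IsUnit x} ^ (Fintype.card ι - 1)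
      = Nat.card R ^ (Fintype.card ι - 1) := by
  have e : {a : {a : ι → R // ∃ i, IsUnit (a i)} // ∑ i, a.1 i * c i = 0}
      ≃ {f : {i // i ≠ i₀} → R // ∃ j, IsUnit (f j)} :=
    (Equiv.subtypeSubtypeEquivSubtypeInter _ _).trans <|
      (Equiv.subtypeEquivRight fun _ => and_comm).trans <|
        (Equiv.subtypeSubtypeEquivSubtypeInter _ _).symm.trans <|
          (hyperplaneEquivPi hc).subtypeEquiv fun a => ⟨fun ⟨i, hi⟩ => by
            by_contra! h
            by_cases hi₀ : i = i₀
            · exact not_isUnit_of_sum_mul_eq_zero hc a.2 h (hi₀ ▸ hi)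
            · exact h ⟨i, hi₀⟩ hi, fun ⟨j, hj⟩ => ⟨j, hj⟩⟩
  have hcard : Fintype.card {i // i ≠ i₀} = Fintype.card ι - 1 := by simp
  rw [Nat.card_congr e, ← hcard]
  exact card_exists_isUnit_add R _

end Hyperplane

theorem ZMod.isLocalRing_prime_pow {p r : ℕ} (hp : p.Prime) (hr : r ≠ 0) :
    IsLocalRing (ZMod (p ^ r)) :=
  have : Fact p.Prime := ⟨hp⟩
  have : Fact (1 < p ^ r) := ⟨Nat.one_lt_pow hr hp.one_lt⟩
  IsLocalRing.of_surjective' (PadicInt.toZModPow r) (ZMod.ringHom_surjective _)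

theorem ZMod.card_nonunits_prime_pow {p r : ℕ} (hp : p.Prime) (hr : r ≠ 0) :
    Nat.card {x : ZMod (p ^ r) // ¬IsUnit x} = p ^ (r - 1) := by
  have : NeZero (p ^ r) := ⟨pow_ne_zero r hp.ne_zero⟩
  have h : Nat.card {x : ZMod (p ^ r) // ¬IsUnit x} + Nat.card (ZMod (p ^ r))ˣ
      = Nat.card (ZMod (p ^ r)) :=
    card_nonunits_add_card_units _
  rw [Nat.card_eq_fintype_card (α := (ZMod _)ˣ), ZMod.card_units_eq_totient, Nat.card_zmod,
    Nat.totient_prime_pow hp (Nat.pos_of_ne_zero hr)] at h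
  obtain ⟨k, rfl⟩ : ∃ k, r = k + 1 := ⟨r - 1, by omega⟩
  rw [Nat.add_sub_cancel] at h ⊢
  have : p ^ k * (p - 1) + p ^ k = p ^ (k + 1) := by
    rw [pow_succ, Nat.mul_sub_one, Nat.sub_add_cancel (Nat.le_mul_of_pos_right _ hp.pos)]
  omega

def monoEquivNatSum (d n : ℕ) : Mono d n ≃ {P : Fin (n + 1) → ℕ // ∑ i, P i = d} where
  toFun m := ⟨fun i => m.1 i, m.2⟩
  invFun P := ⟨fun i => ⟨P.1 i, Nat.lt_succ_of_le
    ((Finset.single_le_sum (f := P.1) (by simp) (Finset.mem_univ i)).trans_eq P.2)⟩, P.2⟩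

theorem card_mono (d n : ℕ) : Fintype.card (Mono d n) = (n + d).choose d := by
  classical
  rw [Fintype.card_congr ((monoEquivNatSum d n).trans (Sym.equivNatSumOfFintype _ _).symm),
    Sym.card_sym_eq_choose, Fintype.card_fin, Nat.add_right_comm, Nat.add_sub_cancel]

theorem finsum_sigma'_eq_of_card_solutions_eq (d n Q : ℕ) [NeZero Q]
    (P : (Mono d n → ZMod Q) → Prop) (K : ℕ)
    (hK : ∀ b : Fin (n + 1) → (ZMod Q)ˣ, Nat.card {a : {a // P a} //
      ∑ m : Mono d n, a.1 m * ∏ i, (b i : ZMod Q) ^ (m.1 i : ℕ) = 0} = K) :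
    ∑ᶠ a : {a // P a}, sigma' d n Q a.1 = Q * K := by
  classical
  have hφ : (Q.totient : ℝ) ≠ 0 := by exact_mod_cast (Nat.totient_pos.2 (NeZero.pos Q)).ne'
  rw [finsum_eq_sum_of_fintype]
  simp only [sigma']
  rw [← Finset.mul_sum, ← Nat.cast_sum, sum_natCard_subtype_comm, Nat.cast_sum]
  simp only [hK, Finset.sum_const, Finset.card_univ, Fintype.card_fun, Fintype.card_fin,
    ZMod.card_units_eq_totient, nsmul_eq_mul, Nat.cast_pow]
  field_simp

theorem mul_pow_sub_pow_div_pow_sub_pow {x s : ℝ} {N : ℕ} (hN : N ≠ 0) (hx : 1 < x) (hs : s ≠ 0) :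
    x * s * ((x * s) ^ (N - 1) - s ^ (N - 1)) / ((x * s) ^ N - s ^ N)
      = (1 - x ^ (-((N : ℤ) - 1))) / (1 - x ^ (-(N : ℤ))) := by
  obtain ⟨M, rfl⟩ : ∃ M, N = M + 1 := ⟨N - 1, by omega⟩
  have hxM : x ^ (M + 1) - 1 ≠ 0 := (sub_pos.2 (one_lt_pow₀ hx (Nat.succ_ne_zero M))).ne'
  have hx0 : x ≠ 0 := by positivity
  have hden : (x * s) ^ (M + 1) - s ^ (M + 1) = s ^ (M + 1) * (x ^ (M + 1) - 1) := by ring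
  rw [show -(((M + 1 : ℕ) : ℤ) - 1) = -(M : ℤ) by push_cast; ring, zpow_neg, zpow_neg,
    zpow_natCast, zpow_natCast, Nat.add_sub_cancel, hden]
  field_simp
  ring

theorem sigma'_average_general (d n : ℕ) (p r : ℕ) (hp : p.Prime) (hr : 1 ≤ r) :
    (∑ᶠ a : {a : Mono d n → ZMod (p ^ r) // ∃ m, IsUnit (a m)},
        sigma' d n (p ^ r) a.1) /
      (Nat.card {a : Mono d n → ZMod (p ^ r) // ∃ m, IsUnit (a m)} : ℝ)
    = (1 - (p : ℝ) ^ (-(((n + d).choose d : ℤ) - 1))) /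
      (1 - (p : ℝ) ^ (-((n + d).choose d : ℤ))) := by
  have hr0 : r ≠ 0 := by omega
  have : NeZero (p ^ r) := ⟨pow_ne_zero r hp.ne_zero⟩
  have : IsLocalRing (ZMod (p ^ r)) := ZMod.isLocalRing_prime_pow hp hr0
  have hN := card_mono d n
  have hs := ZMod.card_nonunits_prime_pow hp hr0
  obtain ⟨m₀⟩ : Nonempty (Mono d n) :=
    Fintype.card_pos_iff.1 (hN ▸ Nat.choose_pos (Nat.le_add_left d n))
  have hF := card_exists_isUnit_add (ZMod (p ^ r)) (Mono d n)
  have hsol (b : Fin (n + 1) → (ZMod (p ^ r))ˣ) := card_exists_isUnit_and_sum_mul_eq_zero_add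
    (c := fun m : Mono d n => ∏ i, (b i : ZMod (p ^ r)) ^ (m.1 i : ℕ)) (i₀ := m₀)
    (by simpa using (∏ i, b i ^ (m₀.1 i : ℕ)).isUnit)
  simp only [hs, Nat.card_zmod, hN] at hF hsol
  have hle (k : ℕ) : (p ^ (r - 1)) ^ k ≤ (p ^ r) ^ k :=
    Nat.pow_le_pow_left (Nat.pow_le_pow_right hp.pos (Nat.sub_le r 1)) k
  rw [finsum_sigma'_eq_of_card_solutions_eq d n (p ^ r) _ _ fun b => Nat.eq_sub_of_add_eq (hsol b),
    Nat.eq_sub_of_add_eq hF, Nat.cast_sub (hle _), Nat.cast_sub (hle _),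
    ← Nat.sub_add_cancel hr, pow_succ', Nat.add_sub_cancel]
  push_cast
  exact mul_pow_sub_pow_div_pow_sub_pow (Nat.choose_pos (Nat.le_add_left d n)).ne'
    (by exact_mod_cast hp.one_lt) (pow_ne_zero _ (by exact_mod_cast hp.ne_zero))

/-- For `d ≥ 2`, `n ≥ 2` and any prime power `p^r`, the average of `σ'(a; p^r)` over
vectors `a ∈ (ℤ/p^rℤ)^{N_{d,n}}` whose coordinates have gcd `1` with `p^r` (i.e. some
coordinate is a unit) equals `(1 − p^{−(N−1)}) / (1 − p^{−N})` where
`N = N_{d,n} = binomial(n+d, d)`. -/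
theorem sigma'_average (d n : ℕ) (hd : 2 ≤ d) (hn : 2 ≤ n)
    (p r : ℕ) (hp : p.Prime) (hr : 1 ≤ r) :
    (∑ᶠ a : {a : Mono d n → ZMod (p ^ r) // ∃ m, IsUnit (a m)},
        sigma' d n (p ^ r) a.1) /
      (Nat.card {a : Mono d n → ZMod (p ^ r) // ∃ m, IsUnit (a m)} : ℝ)
    = (1 - (p : ℝ) ^ (-(((n + d).choose d : ℤ) - 1))) /
      (1 - (p : ℝ) ^ (-((n + d).choose d : ℤ))) :=
  sigma'_average_general d n p r hp hr
end

section
/- Let d ≥ 2, n ≥ 3, p prime, r ≥ 1 and 0 ≤ e ≤ r. Suppose a ∈ (ℤ/p^rℤ)^{N_{d,n}} is such that there exists x ∈ ((ℤ/p^rℤ)^×)^{n+1} with f_a(x) ≡ 0 mod p^r and v_p(∇f_a(x)) = e. Then σ'(a; p^r) ≥ p^{−(e+1)n}. -/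
/-- Evaluation of the degree-`d` form with coefficient vector `a` at `x`. -/
def evalForm (d n Q : ℕ) (a : Mono d n → ZMod Q) (x : Fin (n + 1) → ZMod Q) : ZMod Q :=
  ∑ m : Mono d n, a m * ∏ i, x i ^ (m.1 i : ℕ)

/-- The `j`-th formal partial derivative of the form `f_a`, evaluated at `x`. -/
def pderivForm (d n Q : ℕ) (a : Mono d n → ZMod Q) (x : Fin (n + 1) → ZMod Q)
    (j : Fin (n + 1)) : ZMod Q :=
  ∑ m : Mono d n, a m * ((m.1 j : ℕ) : ZMod Q) *
    ∏ i, x i ^ (if i = j then (m.1 i : ℕ) - 1 else (m.1 i : ℕ))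

/-! Hensel lifting. Expanding one coordinate at a time, `f(y + s eₖ) = f(y) + s ∂ₖf(y) + s²K`,
so every `y ≡ x (mod p^(e+1))` is a root modulo `p^(2e+1)`, and `∂ⱼf(y) = p^e · unit` for a
coordinate `j` with `v_p(∂ⱼf(x)) = e`. Correcting `y` by `p^d t` (`d > e`) in coordinate `j`
alone then raises the order of `f(y)` from `e + d` to `e + d + 1`, so iterating turns each such
`y` into a root modulo `p^r`, still a tuple of units since it is `≡ x (mod p)`. The
`p^((r-e-1)n)` choices of `y` in the other `n` coordinates give distinct roots, and
`φ(p^r) ≤ p^r` turns this count into the bound. -/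

open Finset Function

lemma Finset.prod_univ_eq_mul_prod_erase_of_eq {σ M : Type*} [Fintype σ] [DecidableEq σ]
    [CommMonoid M] {f g : σ → M} (k : σ) (h : ∀ i ≠ k, f i = g i) :
    ∏ i, f i = f k * ∏ i ∈ univ.erase k, g i := by
  rw [← mul_prod_erase univ f (mem_univ k)]
  exact congrArg _ (prod_congr rfl fun i hi => h i (ne_of_mem_erase hi))

lemma IsNilpotent.isUnit_of_dvd_sub {R : Type*} [CommRing R] {π u v : R} (hπ : IsNilpotent π)
    (hu : IsUnit u) (h : π ∣ v - u) : IsUnit v := by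
  obtain ⟨w, hw⟩ := h
  rw [show v = u + π * w by linear_combination hw]
  exact ((Commute.all π w).isNilpotent_mul_right hπ).isUnit_add_left_of_commute hu (Commute.all _ _)

section Forms

variable {R : Type*} [CommRing R] {ι σ : Type*} [Fintype ι] [Fintype σ]

def formEval (c : ι → R) (E : ι → σ → ℕ) (y : σ → R) : R :=
  ∑ m, c m * ∏ i, y i ^ E m i

variable (c : ι → R) (E : ι → σ → ℕ)

lemma map_formEval {S : Type*} [CommRing S] (f : R →+* S) (y : σ → R) :
    f (formEval c E y) = formEval (f ∘ c) E (f ∘ y) := by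
  simp [formEval, map_sum, map_prod, map_pow]

lemma dvd_formEval_sub {q : R} {y z : σ → R} (h : ∀ i, q ∣ z i - y i) :
    q ∣ formEval c E z - formEval c E y := by
  simp_rw [← Ideal.mem_span_singleton, ← Ideal.Quotient.eq] at h ⊢
  rw [map_formEval, map_formEval]
  exact congrArg _ (funext h)

variable [DecidableEq σ]

def formPderiv (y : σ → R) (k : σ) : R :=
  formEval (fun m => c m * (E m k : R)) (fun m i => if i = k then E m i - 1 else E m i) y

lemma sq_dvd_formEval_update_add_sub (y : σ → R) (k : σ) (s : R) :
    s ^ 2 ∣ formEval c E (update y k (y k + s)) - formEval c E y - s * formPderiv c E y k := by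
  set P : ι → R := fun m => ∏ i ∈ univ.erase k, y i ^ E m i
  have hupd : ∀ m, ∏ i, update y k (y k + s) i ^ E m i = (y k + s) ^ E m k * P m := fun m => by
    rw [prod_univ_eq_mul_prod_erase_of_eq k (g := fun i => y i ^ E m i)]
    · rw [update_self]
    · exact fun i hi => by rw [update_of_ne hi]
  have hpow : ∀ m, ∏ i, y i ^ E m i = y k ^ E m k * P m := fun m =>
    prod_univ_eq_mul_prod_erase_of_eq k fun _ _ => rfl
  have hder : ∀ m, ∏ i, y i ^ (if i = k then E m i - 1 else E m i) = y k ^ (E m k - 1) * P m :=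
    fun m => by
      rw [prod_univ_eq_mul_prod_erase_of_eq k (g := fun i => y i ^ E m i)]
      · rw [if_pos rfl]
      · exact fun i hi => by rw [if_neg hi]
  have hsum : formEval c E (update y k (y k + s)) - formEval c E y - s * formPderiv c E y k =
      ∑ m, c m * P m *
        ((y k + s) ^ E m k - y k ^ (E m k - 1) * s * E m k - y k ^ E m k) := by
    simp only [formPderiv, formEval, hupd, hpow, hder, mul_sum, ← sum_sub_distrib]
    exact sum_congr rfl fun m _ => by ring
  rw [hsum]
  exact dvd_sum fun m _ => (sq_dvd_add_pow_sub_sub s (y k) (E m k)).mul_left _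

omit [Fintype ι] in
lemma dvd_sub_of_dvd_update_piecewise_sub {f : (σ → R) → R} {D : R} (y z : σ → R)
    (h : ∀ (s : Finset σ) (k : σ), k ∉ s →
      D ∣ f (update (s.piecewise z y) k (z k)) - f (s.piecewise z y)) :
    D ∣ f z - f y := by
  suffices ∀ s : Finset σ, D ∣ f (s.piecewise z y) - f y by simpa using this univ
  intro s
  induction s using Finset.induction_on with
  | empty => simp
  | insert k s hk ih =>
    rw [piecewise_insert]
    simpa using dvd_add (h s k hk) ih

lemma pow_dvd_formEval_sub_of_pow_dvd_formPderiv {q : R} {e : ℕ} {y z : σ → R}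
    (hz : ∀ i, q ^ (e + 1) ∣ z i - y i) (hD : ∀ i, q ^ e ∣ formPderiv c E y i) :
    q ^ (2 * e + 1) ∣ formEval c E z - formEval c E y := by
  refine dvd_sub_of_dvd_update_piecewise_sub y z fun s k hk => ?_
  set w := s.piecewise z y
  have hw : ∀ i, q ^ (e + 1) ∣ w i - y i := fun i => by
    by_cases hi : i ∈ s <;> simp [w, hi, hz i]
  have hDw : q ^ e ∣ formPderiv c E w k := by
    have h : q ^ (e + 1) ∣ formPderiv c E w k - formPderiv c E y k := dvd_formEval_sub _ _ hw
    simpa using dvd_add ((pow_dvd_pow q e.le_succ).trans h) (hD k)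
  have hstep : update w k (z k) = update w k (w k + (z k - y k)) := by
    rw [show w k = y k from piecewise_eq_of_notMem s z y hk, add_sub_cancel]
  obtain ⟨K, hK⟩ := sq_dvd_formEval_update_add_sub c E w k (z k - y k)
  rw [hstep, show formEval c E (update w k (w k + (z k - y k))) - formEval c E w =
    (z k - y k) * formPderiv c E w k + (z k - y k) ^ 2 * K by linear_combination hK]
  refine dvd_add ?_ (Dvd.dvd.mul_right ?_ K)
  · rw [show 2 * e + 1 = (e + 1) + e by ring, pow_add]
    exact mul_dvd_mul (hz k) hDw
  · exact (pow_dvd_pow q (by omega)).trans (pow_mul q (e + 1) 2 ▸ pow_dvd_pow_of_dvd (hz k) 2)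

lemma exists_pow_succ_dvd_formEval_update {π u : R} {e d : ℕ} (hed : e < d) {y : σ → R} {j : σ}
    (hy : π ^ (e + d) ∣ formEval c E y) (hu : IsUnit u) (hj : formPderiv c E y j = π ^ e * u) :
    ∃ t, π ^ (e + d + 1) ∣ formEval c E (update y j (y j + π ^ d * t)) := by
  obtain ⟨B, hB⟩ := hy
  obtain ⟨K, hK⟩ := sq_dvd_formEval_update_add_sub c E y j (π ^ d * (-B * ↑hu.unit⁻¹))
  refine ⟨-B * ↑hu.unit⁻¹, (pow_dvd_pow π (by omega : e + d + 1 ≤ 2 * d)).mul_right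
    ((-B * ↑hu.unit⁻¹) ^ 2 * K) |>.trans (dvd_of_eq ?_)⟩
  have hinv : u * ↑hu.unit⁻¹ = 1 := hu.mul_val_inv
  linear_combination -hK - hB - π ^ d * (-B * ↑hu.unit⁻¹) * hj + π ^ (e + d) * B * hinv

lemma exists_pow_dvd_formEval_update {π : R} {e : ℕ} {y : σ → R} {j : σ}
    (hy : π ^ (2 * e + 1) ∣ formEval c E y)
    (hunit : ∀ t, ∃ u, IsUnit u ∧ formPderiv c E (update y j (y j + π ^ (e + 1) * t)) j = π ^ e * u)
    (k : ℕ) : ∃ t, π ^ (2 * e + 1 + k) ∣ formEval c E (update y j (y j + π ^ (e + 1) * t)) := by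
  induction k with
  | zero => exact ⟨0, by simpa using hy⟩
  | succ k ih =>
    obtain ⟨t, ht⟩ := ih
    obtain ⟨u, hu, hj⟩ := hunit t
    obtain ⟨t', ht'⟩ := exists_pow_succ_dvd_formEval_update c E (d := e + 1 + k) (by omega)
      (by rwa [show e + (e + 1 + k) = 2 * e + 1 + k by ring]) hu hj
    refine ⟨t + π ^ k * t', ?_⟩
    rw [update_idem, update_self, show e + (e + 1 + k) + 1 = 2 * e + 1 + (k + 1) by ring] at ht'
    convert ht' using 3
    ring

theorem exists_formEval_update_eq_zero {π u : R} (hπ : IsNilpotent π) {e : ℕ} {x y : σ → R}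
    {j : σ} (hx : formEval c E x = 0) (hD : ∀ i, π ^ e ∣ formPderiv c E x i) (hu : IsUnit u)
    (hj : formPderiv c E x j = π ^ e * u) (hy : ∀ i, π ^ (e + 1) ∣ y i - x i) :
    ∃ t, formEval c E (update y j (y j + π ^ (e + 1) * t)) = 0 := by
  have hy' : π ^ (2 * e + 1) ∣ formEval c E y := by
    simpa [hx] using pow_dvd_formEval_sub_of_pow_dvd_formPderiv c E hy hD
  have hunit : ∀ t, ∃ v, IsUnit v ∧
      formPderiv c E (update y j (y j + π ^ (e + 1) * t)) j = π ^ e * v := by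
    intro t
    have hyt : ∀ i, π ^ (e + 1) ∣ update y j (y j + π ^ (e + 1) * t) i - x i := fun i => by
      rcases eq_or_ne i j with rfl | hi
      · simpa [add_sub_right_comm] using (hy i).add (dvd_mul_right _ t)
      · simpa [hi] using hy i
    obtain ⟨w, hw⟩ : π ^ (e + 1) ∣ formPderiv c E (update y j (y j + π ^ (e + 1) * t)) j -
        formPderiv c E x j := dvd_formEval_sub _ _ hyt
    exact ⟨u + π * w, hπ.isUnit_of_dvd_sub hu ⟨w, by ring⟩, by linear_combination hw + hj⟩
  obtain ⟨N, hN⟩ := hπ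
  obtain ⟨t, ht⟩ := exists_pow_dvd_formEval_update c E hy' hunit N
  exact ⟨t, zero_dvd_iff.mp (by rwa [pow_add, hN, mul_zero] at ht)⟩

end Forms

lemma ZMod.isUnit_of_not_natCast_dvd {p r : ℕ} (hp : p.Prime) (hr : 0 < r) {c : ZMod (p ^ r)}
    (h : ¬ (p : ZMod (p ^ r)) ∣ c) : IsUnit c := by
  have : NeZero (p ^ r) := ⟨pow_ne_zero r hp.ne_zero⟩
  rw [← ZMod.natCast_zmod_val c, ZMod.isUnit_natCast_iff_not_dvd_pow hp hr]
  exact fun hdvd => h (by simpa using Nat.cast_dvd_cast (α := ZMod (p ^ r)) hdvd)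

lemma ZMod.natCast_mul_val_injective {m N a : ℕ} [NeZero m] (ha : 0 < a) (h : a * m ≤ N) :
    Injective fun u : ZMod m => ((a * u.val : ℕ) : ZMod N) := by
  intro u v huv
  have hlt : ∀ w : ZMod m, a * w.val < N := fun w =>
    (Nat.mul_lt_mul_of_pos_left (ZMod.val_lt w) ha).trans_le h
  have := congrArg ZMod.val huv
  rw [ZMod.val_natCast_of_lt (hlt u), ZMod.val_natCast_of_lt (hlt v)] at this
  exact ZMod.val_injective m (Nat.eq_of_mul_eq_mul_left ha this)

/-- The points `x + p ^ (e + 1) z` with `z_j = 0` lift to distinct unit roots. -/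
theorem pow_le_card_units_formEval_eq_zero {ι : Type*} [Fintype ι] {p r e n : ℕ} (hp : p.Prime)
    (her : e < r) (c : ι → ZMod (p ^ r)) (E : ι → Fin (n + 1) → ℕ)
    (x : Fin (n + 1) → (ZMod (p ^ r))ˣ) (hx : formEval c E (fun i => (x i : ZMod (p ^ r))) = 0)
    (hD : ∀ i, (p : ZMod (p ^ r)) ^ e ∣ formPderiv c E (fun i => (x i : ZMod (p ^ r))) i)
    (j : Fin (n + 1))
    (hj : ¬ (p : ZMod (p ^ r)) ^ (e + 1) ∣ formPderiv c E (fun i => (x i : ZMod (p ^ r))) j) :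
    p ^ ((r - e - 1) * n) ≤ Nat.card {b : Fin (n + 1) → (ZMod (p ^ r))ˣ //
      formEval c E (fun i => (b i : ZMod (p ^ r))) = 0} := by
  have : NeZero (p ^ (r - e - 1)) := ⟨pow_ne_zero _ hp.ne_zero⟩
  have hπ : IsNilpotent (p : ZMod (p ^ r)) := ⟨r, by rw [← Nat.cast_pow, ZMod.natCast_self]⟩
  obtain ⟨u, hu⟩ := hD j
  have hunit : IsUnit u := ZMod.isUnit_of_not_natCast_dvd hp (by omega) fun h =>
    hj (hu ▸ pow_succ (p : ZMod (p ^ r)) e ▸ mul_dvd_mul_left _ h)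
  let y (v : Fin n → ZMod (p ^ (r - e - 1))) (k : Fin (n + 1)) : ZMod (p ^ r) :=
    x k + (p : ZMod (p ^ r)) ^ (e + 1) *
      Fin.insertNth (α := fun _ => ZMod (p ^ r)) j 0 (fun i => ((v i).val : ZMod (p ^ r))) k
  have hroot : ∀ v, ∃ b : {b : Fin (n + 1) → (ZMod (p ^ r))ˣ //
      formEval c E (fun i => (b i : ZMod (p ^ r))) = 0},
      ∀ i, (b.1 (j.succAbove i) : ZMod (p ^ r)) = y v (j.succAbove i) := by
    intro v
    obtain ⟨t, ht⟩ := exists_formEval_update_eq_zero c E hπ hx hD hunit hu (y := y v)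
      fun i => by simp [y]
    have hb : ∀ k, IsUnit (update (y v) j (y v j + (p : ZMod (p ^ r)) ^ (e + 1) * t) k) := by
      intro k
      refine hπ.isUnit_of_dvd_sub (x k).isUnit ((dvd_pow_self _ e.succ_ne_zero).trans ?_)
      rcases eq_or_ne k j with rfl | hk
      · simp [y]
      · simp [y, hk]
    exact ⟨⟨fun k => (hb k).unit, by simpa using ht⟩, fun i => by simp⟩
  choose Φ hΦ using hroot
  have hΦinj : Injective Φ := by
    intro v w hvw
    funext i
    have h := (hΦ v i).symm.trans (hvw ▸ hΦ w i)
    simp only [y, Fin.insertNth_apply_succAbove, add_right_inj] at h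
    refine ZMod.natCast_mul_val_injective (N := p ^ r) (pow_pos hp.pos (e + 1)) ?_ ?_
    · rw [← pow_add]; exact Nat.pow_le_pow_right hp.pos (by omega)
    · push_cast; exact h
  calc p ^ ((r - e - 1) * n) = Nat.card (Fin n → ZMod (p ^ (r - e - 1))) := by
        simp [Nat.card_eq_fintype_card, ZMod.card, pow_mul]
    _ ≤ _ := Nat.card_le_card_of_injective Φ hΦinj

lemma zpow_neg_mul_card_le_sigma' {d n Q : ℕ} (hQ : 0 < Q) (a : Mono d n → ZMod Q) :
    (Q : ℝ) ^ (-(n : ℤ)) * Nat.card {b : Fin (n + 1) → (ZMod Q)ˣ //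
      ∑ m : Mono d n, a m * ∏ i, ((b i : ZMod Q)) ^ (m.1 i : ℕ) = 0} ≤ sigma' d n Q a := by
  have hQ' : (0 : ℝ) < Q := by exact_mod_cast hQ
  have hφ : (0 : ℝ) < Nat.totient Q := by exact_mod_cast Nat.totient_pos.mpr hQ
  have hφQ : (Nat.totient Q : ℝ) ≤ Q := by exact_mod_cast Nat.totient_le Q
  unfold sigma'
  gcongr
  calc (Q : ℝ) ^ (-(n : ℤ)) = Q / Q ^ (n + 1) := by
        rw [zpow_neg, zpow_natCast, pow_succ, div_mul_cancel_right₀ hQ'.ne']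
    _ ≤ Q / (Nat.totient Q) ^ (n + 1) := by gcongr

lemma zpow_neg_le_pow_zpow_neg_mul_pow {p : ℕ} (hp : 1 ≤ p) (n r e : ℕ) :
    (p : ℝ) ^ (-(((e + 1) * n : ℕ) : ℤ)) ≤
      ((p ^ r : ℕ) : ℝ) ^ (-(n : ℤ)) * (p ^ ((r - e - 1) * n) : ℕ) := by
  have hexp : (-(((e + 1) * n : ℕ) : ℤ)) ≤ r * -(n : ℤ) + ((r - e - 1) * n : ℕ) := by
    have h : (r : ℤ) ≤ e + 1 + ((r - e - 1 : ℕ) : ℤ) := by omega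
    push_cast
    nlinarith [mul_le_mul_of_nonneg_right h n.cast_nonneg]
  rw [Nat.cast_pow, Nat.cast_pow, ← zpow_natCast, ← zpow_natCast, ← zpow_mul, ← zpow_add₀]
  · exact zpow_le_zpow_right₀ (Nat.one_le_cast.mpr hp) hexp
  · exact_mod_cast (Nat.one_le_iff_ne_zero.mp hp)

theorem sigma'_lower_bound_general (d n : ℕ)
    (p r e : ℕ) (hp : p.Prime)
    (a : Mono d n → ZMod (p ^ r)) (x : Fin (n + 1) → (ZMod (p ^ r))ˣ)
    (hx0 : evalForm d n (p ^ r) a (fun i => (x i : ZMod (p ^ r))) = 0)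
    (hdvd : ∀ j, ((p : ZMod (p ^ r))) ^ e ∣
      pderivForm d n (p ^ r) a (fun i => (x i : ZMod (p ^ r))) j)
    (hmax : e < r → ∃ j, ¬ ((p : ZMod (p ^ r))) ^ (e + 1) ∣
      pderivForm d n (p ^ r) a (fun i => (x i : ZMod (p ^ r))) j) :
    (p : ℝ) ^ (-(((e + 1) * n : ℕ) : ℤ)) ≤ sigma' d n (p ^ r) a := by
  have : NeZero (p ^ r) := ⟨pow_ne_zero r hp.ne_zero⟩
  have hcard : p ^ ((r - e - 1) * n) ≤ Nat.card {b : Fin (n + 1) → (ZMod (p ^ r))ˣ //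
      ∑ m : Mono d n, a m * ∏ i, ((b i : ZMod (p ^ r))) ^ (m.1 i : ℕ) = 0} := by
    rcases lt_or_ge e r with her | hre
    · obtain ⟨j, hj⟩ := hmax her
      -- `evalForm` and `pderivForm` are `formEval` and `formPderiv` with exponents `m.1 i`.
      exact pow_le_card_units_formEval_eq_zero hp her a (fun m i => m.1 i) x hx0 hdvd j hj
    · have : Nonempty {b : Fin (n + 1) → (ZMod (p ^ r))ˣ //
          ∑ m : Mono d n, a m * ∏ i, ((b i : ZMod (p ^ r))) ^ (m.1 i : ℕ) = 0} := ⟨⟨x, hx0⟩⟩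
      rw [show r - e - 1 = 0 by omega, zero_mul, pow_zero]
      exact Nat.card_pos
  calc (p : ℝ) ^ (-(((e + 1) * n : ℕ) : ℤ))
      ≤ ((p ^ r : ℕ) : ℝ) ^ (-(n : ℤ)) * (p ^ ((r - e - 1) * n) : ℕ) :=
        zpow_neg_le_pow_zpow_neg_mul_pow hp.one_lt.le n r e
    _ ≤ _ := by gcongr
    _ ≤ sigma' d n (p ^ r) a := zpow_neg_mul_card_le_sigma' (pow_pos hp.pos r) a

/-- Let `d ≥ 2`, `n ≥ 3`, `p` prime, `r ≥ 1` and `0 ≤ e ≤ r`. If there is a unit tuple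
`x` with `f_a(x) ≡ 0 (mod p^r)` and `v_p(∇f_a(x)) = e`, then
`σ'(a; p^r) ≥ p^{−(e+1)n}`. -/
theorem sigma'_lower_bound (d n : ℕ) (hd : 2 ≤ d) (hn : 3 ≤ n)
    (p r e : ℕ) (hp : p.Prime) (hr : 1 ≤ r) (he : e ≤ r)
    (a : Mono d n → ZMod (p ^ r)) (x : Fin (n + 1) → (ZMod (p ^ r))ˣ)
    (hx0 : evalForm d n (p ^ r) a (fun i => (x i : ZMod (p ^ r))) = 0)
    (hdvd : ∀ j, ((p : ZMod (p ^ r))) ^ e ∣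
      pderivForm d n (p ^ r) a (fun i => (x i : ZMod (p ^ r))) j)
    (hmax : e < r → ∃ j, ¬ ((p : ZMod (p ^ r))) ^ (e + 1) ∣
      pderivForm d n (p ^ r) a (fun i => (x i : ZMod (p ^ r))) j) :
    (p : ℝ) ^ (-(((e + 1) * n : ℕ) : ℤ)) ≤ sigma' d n (p ^ r) a :=
  sigma'_lower_bound_general d n p r e hp a x hx0 hdvd hmax
end

section
/- Let d ≥ 2, n ≥ 3, and N = binomial(n+d,d). The set 𝒰 of integer coefficient vectors a ∈ ℤ^N with ‖a‖ ≤ A such that the form f_a has a zero on the unit sphere S^n with all coordinates positive, but some c within Euclidean distance 1 of a has no such zero, satisfies #𝒰 ≪ A^{N−1}. -/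
/-- The degree-`d` form with real coefficient vector `a`, evaluated at `x ∈ ℝ^{n+1}`. -/
def formR (d n : ℕ) (a : Mono d n → ℝ) (x : Fin (n + 1) → ℝ) : ℝ :=
  ∑ m : Mono d n, a m * ∏ i, x i ^ (m.1 i : ℕ)

open scoped RealInnerProductSpace
open Filter Topology Finset

section OuterNormal

variable {F : Type*} [NormedAddCommGroup F] [InnerProductSpace ℝ F]

theorem exists_outerNormal_near_of_notMem_interior [CompleteSpace F] {K : Set F}
    (hK : Convex ℝ K) (hKc : IsClosed K) {a c : F} {r : ℝ} (hr : 0 < r)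
    (ha : a ∉ interior K) (hc : c ∈ K) (hac : ‖a - c‖ ≤ r) :
    ∃ p ∈ K, ∃ u : F, ‖u‖ = 1 ∧ ‖a - p‖ ≤ 2 * r ∧ ∀ y ∈ K, ⟪u, y - p⟫ ≤ 0 := by
  -- project onto `K` a point `b ∉ K` close to `a`: `b - p` is then an outer normal at `p`
  obtain ⟨b, hbK, hab⟩ :=
    Metric.mem_closure_iff.1 (closure_compl (s := K) ▸ ha : a ∈ closure Kᶜ) (r / 2) (half_pos hr)
  rw [dist_eq_norm] at hab
  obtain ⟨p, hpK, hp⟩ := exists_norm_eq_iInf_of_complete_convex ⟨c, hc⟩ hKc.isComplete hK b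
  have hsupp : ∀ y ∈ K, ⟪b - p, y - p⟫ ≤ 0 := (norm_eq_iInf_iff_real_inner_le_zero hK hpK).1 hp
  have hbp : ‖b - p‖ ≤ ‖b - c‖ :=
    hp ▸ ciInf_le ⟨0, Set.forall_mem_range.2 fun _ => norm_nonneg _⟩ (⟨c, hc⟩ : K)
  have hbp0 : 0 < ‖b - p‖ := norm_pos_iff.2 (sub_ne_zero.2 fun h => hbK (h ▸ hpK))
  refine ⟨p, hpK, ‖b - p‖⁻¹ • (b - p), ?_, ?_, fun y hy => ?_⟩
  · rw [norm_smul, norm_inv, norm_norm, inv_mul_cancel₀ hbp0.ne']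
  · linarith [norm_sub_le_norm_sub_add_norm_sub a b p, norm_sub_le_norm_sub_add_norm_sub b a c,
      norm_sub_rev a b]
  · rw [real_inner_smul_left]
    exact mul_nonpos_of_nonneg_of_nonpos (inv_nonneg.2 hbp0.le) (hsupp y hy)

def NearOuterNormal (K : Set F) (r : ℝ) (e : F) (κ : ℝ) (a : F) : Prop :=
  ∃ p ∈ K, ∃ u : F, ‖u‖ ≤ 1 ∧ ‖a - p‖ ≤ r ∧ (∀ y ∈ K, ⟪u, y - p⟫ ≤ 0) ∧ κ ≤ ⟪u, e⟫

theorem NearOuterNormal.abs_le {K : Set F} {r κ t : ℝ} {e a a' : F}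
    (ha : NearOuterNormal K r e κ a) (ha' : NearOuterNormal K r e κ a') (hκ : 0 < κ)
    (ht : a' - a = t • e) : |t| ≤ 2 * r / κ := by
  obtain ⟨p, hpK, u, hu, hap, hp, hue⟩ := ha
  obtain ⟨p', hp'K, u', hu', hap', hp', hue'⟩ := ha'
  set w := (p' - a') + (a - p) with hw_def
  have hw : ‖w‖ ≤ 2 * r := by linarith [norm_add_le (p' - a') (a - p), norm_sub_rev p' a']
  have hpp' : p' - p = t • e + w := by rw [← ht, hw_def]; abel
  -- the supporting inequality at `p` bounds `t` from above, the one at `p'` from below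
  have h₁ : t * ⟪u, e⟫ ≤ 2 * r := by
    have := hp p' hp'K
    rw [hpp', inner_add_right, real_inner_smul_right] at this
    linarith [neg_le_abs ⟪u, w⟫, abs_real_inner_le_norm u w,
      mul_le_of_le_one_left (norm_nonneg w) hu]
  have h₂ : -t * ⟪u', e⟫ ≤ 2 * r := by
    have := hp' p hpK
    rw [show p - p' = -(t • e + w) by rw [← hpp']; abel, inner_neg_right, inner_add_right,
      real_inner_smul_right] at this
    linarith [le_abs_self ⟪u', w⟫, abs_real_inner_le_norm u' w,
      mul_le_of_le_one_left (norm_nonneg w) hu']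
  rw [le_div_iff₀ hκ]
  rcases le_total 0 t with h | h
  · rw [abs_of_nonneg h]; nlinarith
  · rw [abs_of_nonpos h]; nlinarith

theorem notMem_interior_of_inner_eq_zero {S : Set F} {w a : F} (hS : ∀ v ∈ S, 0 ≤ ⟪v, w⟫)
    (hw : w ≠ 0) (ha : ⟪a, w⟫ = 0) : a ∉ interior S := by
  intro h
  have hlim : Tendsto (fun δ : ℝ => a - δ • w) (𝓝[>] 0) (𝓝 a) :=
    tendsto_nhdsWithin_of_tendsto_nhds
      ((continuous_const.sub (continuous_id.smul continuous_const)).tendsto' 0 a (by simp))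
  obtain ⟨δ, hδS, hδ⟩ :=
    ((hlim.eventually (mem_interior_iff_mem_nhds.1 h)).and self_mem_nhdsWithin).exists
  have := hS _ hδS
  rw [inner_sub_left, ha, real_inner_smul_left, real_inner_self_eq_norm_sq] at this
  nlinarith [mul_pos (Set.mem_Ioi.1 hδ) (pow_pos (norm_pos_iff.2 hw) 2)]

end OuterNormal


section Lattice

variable {ι : Type*}

def intPoint (a : ι → ℤ) : EuclideanSpace ℝ ι := WithLp.toLp 2 fun i => (a i : ℝ)

theorem exists_one_le_card_mul_abs_apply [Fintype ι] {u : EuclideanSpace ℝ ι} (hu : ‖u‖ = 1) :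
    ∃ j, 1 ≤ Fintype.card ι * |u j| := by
  have hsq : ∑ i, |u i| ^ 2 = 1 := by
    simpa [hu, sq_abs] using (EuclideanSpace.real_norm_sq_eq u).symm
  have hne : (univ : Finset ι).Nonempty := by
    by_contra h
    simp [not_nonempty_iff_eq_empty.1 h] at hsq
  obtain ⟨j, -, hj⟩ := exists_max_image univ (fun i => |u i|) hne
  refine ⟨j, ?_⟩
  calc (1 : ℝ) = ∑ i, |u i| ^ 2 := hsq.symm
    _ ≤ ∑ _i : ι, |u j| := sum_le_sum fun i _ => by
        have : |u i| ≤ 1 := hu ▸ PiLp.norm_apply_le u i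
        nlinarith [abs_nonneg (u i), hj i (mem_univ i)]
    _ = Fintype.card ι * |u j| := by simp

theorem intPoint_mem_piFinset [Fintype ι] [DecidableEq ι] {a : ι → ℤ} {A : ℝ}
    (h : ‖intPoint a‖ ≤ A) :
    a ∈ Fintype.piFinset fun _ => Icc (-⌊A⌋₊ : ℤ) ⌊A⌋₊ := by
  refine Fintype.mem_piFinset.2 fun i => mem_Icc.2 (abs_le.1 ?_)
  have hi : |(a i : ℝ)| ≤ A := (PiLp.norm_apply_le (intPoint a) i).trans h
  have : ((|a i| : ℤ) : ℝ) < (⌊A⌋₊ : ℤ) + 1 := by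
    push_cast; exact hi.trans_lt (Nat.lt_floor_add_one A)
  exact Int.lt_add_one_iff.1 (by exact_mod_cast this)

theorem intPoint_sub_eq_smul_single [DecidableEq ι] {a b : ι → ℤ} {j : ι}
    (h : ∀ i ≠ j, a i = b i) {σ : ℝ} (hσ : σ * σ = 1) :
    intPoint b - intPoint a = (σ * (b j - a j)) • EuclideanSpace.single j σ := by
  ext i
  by_cases hi : i = j
  · subst hi
    simp only [intPoint, PiLp.sub_apply, PiLp.smul_apply, PiLp.single_apply, if_true, smul_eq_mul]
    linear_combination ((a i : ℝ) - b i) * hσ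
  · simp [intPoint, hi, h i hi]

theorem card_le_of_abs_sub_apply_le [Fintype ι] [DecidableEq ι] {s : Finset (ι → ℤ)} (j : ι)
    {M D : ℕ} (hM : s ⊆ Fintype.piFinset fun _ => Icc (-M : ℤ) M)
    (hD : ∀ a ∈ s, ∀ b ∈ s, (∀ i ≠ j, a i = b i) → |a j - b j| ≤ D) :
    #s ≤ (2 * D + 1) * (2 * M + 1) ^ (Fintype.card ι - 1) := by
  have hmaps : ∀ a ∈ s, (fun i : {i // i ≠ j} => a i) ∈
      Fintype.piFinset fun _ => Icc (-M : ℤ) M :=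
    fun a ha => Fintype.mem_piFinset.2 fun i => Fintype.mem_piFinset.1 (hM ha) i
  -- a fibre of the restriction to the coordinates `≠ j` injects, via the `j`-th coordinate,
  -- into an interval of length `2 D`
  have hfib : ∀ b ∈ Fintype.piFinset fun _ : {i // i ≠ j} => Icc (-M : ℤ) M,
      #{a ∈ s | (fun i : {i // i ≠ j} => a i) = b} ≤ 2 * D + 1 := by
    intro b _
    rcases eq_empty_or_nonempty {a ∈ s | (fun i : {i // i ≠ j} => a i) = b} with he | ⟨a₀, ha₀⟩
    · simp [he]
    have hagree : ∀ a ∈ {a ∈ s | (fun i : {i // i ≠ j} => a i) = b}, ∀ i ≠ j, a i = a₀ i := by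
      intro a ha i hi
      exact congrFun ((mem_filter.1 ha).2.trans (mem_filter.1 ha₀).2.symm) ⟨i, hi⟩
    calc _ ≤ #(Icc (a₀ j - D) (a₀ j + D)) := by
          refine card_le_card_of_injOn (fun a => a j) (fun a ha => ?_) (fun a ha a' ha' haa' => ?_)
          · have := hD a (mem_filter.1 ha).1 a₀ (mem_filter.1 ha₀).1 (hagree a ha)
            rw [coe_Icc, Set.mem_Icc]
            constructor <;> linarith [abs_le.1 this]
          · funext i
            by_cases hi : i = j
            · exact hi ▸ haa'
            · rw [hagree a ha i hi, hagree a' ha' i hi]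
      _ = 2 * D + 1 := by rw [Int.card_Icc]; omega
  have := card_le_mul_card_image_of_maps_to hmaps _ hfib
  rwa [Fintype.card_piFinset, prod_const, Int.card_Icc, card_univ, Fintype.card_subtype_compl,
    Fintype.card_subtype_eq, show ((M : ℤ) + 1 - -M).toNat = 2 * M + 1 by omega] at this

def latticeNearFrontier [Fintype ι] (K : Set (EuclideanSpace ℝ ι)) (A : ℝ) : Set (ι → ℤ) :=
  {a | ‖intPoint a‖ ≤ A ∧ intPoint a ∉ interior K ∧ ∃ c ∈ K, ‖intPoint a - c‖ ≤ 1}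

theorem finite_latticeNearFrontier [Fintype ι] (K : Set (EuclideanSpace ℝ ι)) (A : ℝ) :
    (latticeNearFrontier K A).Finite := by
  classical
  exact (Fintype.piFinset _).finite_toSet.subset fun a ha => intPoint_mem_piFinset ha.1

theorem exists_nearOuterNormal_single [Fintype ι] [DecidableEq ι] {K : Set (EuclideanSpace ℝ ι)}
    (hK : Convex ℝ K) (hKc : IsClosed K) {a c : EuclideanSpace ℝ ι} (ha : a ∉ interior K)
    (hc : c ∈ K) (hac : ‖a - c‖ ≤ 1) :
    ∃ j, ∃ σ ∈ ({1, -1} : Finset ℝ),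
      NearOuterNormal K 2 (EuclideanSpace.single j σ) (1 / Fintype.card ι) a := by
  obtain ⟨p, hpK, u, hu, hap, hp⟩ :=
    exists_outerNormal_near_of_notMem_interior hK hKc one_pos ha hc hac
  obtain ⟨j, hj⟩ := exists_one_le_card_mul_abs_apply hu
  have hN : (0 : ℝ) < Fintype.card ι := by exact_mod_cast Fintype.card_pos_iff.2 ⟨j⟩
  have hκ : 1 / (Fintype.card ι : ℝ) ≤ |u j| := by rw [div_le_iff₀ hN]; linarith
  have hap2 : ‖a - p‖ ≤ 2 := by linarith
  rcases le_total 0 (u j) with h | h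
  · exact ⟨j, 1, by simp, p, hpK, u, hu.le, hap2, hp,
      by simpa [EuclideanSpace.inner_single_right, abs_of_nonneg h] using hκ⟩
  · exact ⟨j, -1, by simp, p, hpK, u, hu.le, hap2, hp,
      by simpa [EuclideanSpace.inner_single_right, abs_of_nonpos h] using hκ⟩

open Classical in
theorem card_filter_nearOuterNormal_single_le [Fintype ι] [DecidableEq ι]
    (K : Set (EuclideanSpace ℝ ι)) (j : ι) {σ : ℝ} (hσ : σ = 1 ∨ σ = -1) (M : ℕ) :
    #{a ∈ Fintype.piFinset fun _ => Icc (-M : ℤ) M |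
        NearOuterNormal K 2 (EuclideanSpace.single j σ) (1 / Fintype.card ι) (intPoint a)} ≤
      (8 * Fintype.card ι + 1) * (2 * M + 1) ^ (Fintype.card ι - 1) := by
  have hN : (0 : ℝ) < Fintype.card ι := by exact_mod_cast Fintype.card_pos_iff.2 ⟨j⟩
  refine (card_le_of_abs_sub_apply_le (D := 4 * Fintype.card ι) j (filter_subset _ _)
    fun a ha b hb hab => ?_).trans_eq (by ring)
  have h := (mem_filter.1 ha).2.abs_le (mem_filter.1 hb).2 (by positivity)
    (intPoint_sub_eq_smul_single hab (by rcases hσ with rfl | rfl <;> norm_num))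
  rw [abs_mul, show |σ| = 1 by rcases hσ with rfl | rfl <;> norm_num, one_mul, abs_sub_comm,
    div_div_eq_mul_div, div_one] at h
  exact_mod_cast (by push_cast; linarith : ((|a j - b j| : ℤ) : ℝ) ≤ ((4 * Fintype.card ι : ℕ) : ℝ))

theorem ncard_latticeNearFrontier_le [Fintype ι] {K : Set (EuclideanSpace ℝ ι)}
    (hK : Convex ℝ K) (hKc : IsClosed K) {A : ℝ} (hA : 1 ≤ A) :
    ((latticeNearFrontier K A).ncard : ℝ) ≤
      2 * Fintype.card ι * (8 * Fintype.card ι + 1) * (3 * A) ^ (Fintype.card ι - 1) := by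
  classical
  set N := Fintype.card ι
  set M := ⌊A⌋₊
  -- sort the points by a coordinate direction `σ eⱼ` that makes an angle bounded away from
  -- `π / 2` with an outer normal
  set S : ι × ℝ → Finset (ι → ℤ) := fun jσ =>
    {a ∈ Fintype.piFinset fun _ => Icc (-M : ℤ) M |
      NearOuterNormal K 2 (EuclideanSpace.single jσ.1 jσ.2) (1 / N) (intPoint a)}
  have hcover : latticeNearFrontier K A ⊆ ↑((univ ×ˢ {1, -1}).biUnion S) := by
    rintro a ⟨haA, hint, c, hc, hac⟩
    obtain ⟨j, σ, hσ, ha⟩ := exists_nearOuterNormal_single hK hKc hint hc hac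
    simp only [coe_biUnion, coe_product, coe_univ, Set.mem_iUnion]
    exact ⟨(j, σ), by simpa using hσ, mem_filter.2 ⟨intPoint_mem_piFinset haA, ha⟩⟩
  have hcard := card_biUnion_le_card_mul (univ ×ˢ {1, -1}) S _ fun jσ hjσ =>
    card_filter_nearOuterNormal_single_le K jσ.1 (by simpa using (mem_product.1 hjσ).2) M
  rw [card_product, card_univ, show #({1, -1} : Finset ℝ) = 2 by norm_num] at hcard
  have hM : (2 * M + 1 : ℝ) ≤ 3 * A := by linarith [Nat.floor_le (zero_le_one.trans hA)]
  calc _ ≤ (#((univ ×ˢ {1, -1}).biUnion S) : ℝ) := by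
        exact_mod_cast (Set.ncard_le_ncard hcover (finite_toSet _)).trans_eq
          (Set.ncard_coe_finset _)
    _ ≤ N * 2 * ((8 * N + 1) * (2 * M + 1) ^ (N - 1)) := by exact_mod_cast hcard
    _ = 2 * N * (8 * N + 1) * (2 * M + 1) ^ (N - 1) := by ring
    _ ≤ _ := by gcongr

end Lattice

section Forms

variable {d n : ℕ}

instance : Nonempty (Mono d n) :=
  ⟨⟨fun i => if i = 0 then Fin.last d else 0, by
    rw [sum_eq_single 0] <;> simp +contextual [Fin.last]⟩⟩

def posSphere (n : ℕ) : Set (Fin (n + 1) → ℝ) := {x | ∑ i, x i ^ 2 = 1 ∧ ∀ i, 0 < x i}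

def monomialVec (d n : ℕ) (x : Fin (n + 1) → ℝ) : EuclideanSpace ℝ (Mono d n) :=
  WithLp.toLp 2 fun m => ∏ i, x i ^ (m.1 i : ℕ)

theorem formR_eq_inner (c : EuclideanSpace ℝ (Mono d n)) (x : Fin (n + 1) → ℝ) :
    formR d n c x = ⟪c, monomialVec d n x⟫ := by
  simp [formR, monomialVec, PiLp.inner_apply, mul_comm]

theorem monomialVec_ne_zero {x : Fin (n + 1) → ℝ} (hx : ∀ i, 0 < x i) :
    monomialVec d n x ≠ 0 := by
  obtain ⟨m⟩ := (inferInstance : Nonempty (Mono d n))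
  intro h
  have : ∏ i, x i ^ (m.1 i : ℕ) = 0 := congrArg (fun v => v m) h
  exact (prod_pos fun i _ => pow_pos (hx i) _).ne' this

theorem formR_smul (c : Mono d n → ℝ) (r : ℝ) (x : Fin (n + 1) → ℝ) :
    formR d n c (r • x) = r ^ d * formR d n c x := by
  simp only [formR, mul_sum, Pi.smul_apply, smul_eq_mul, mul_pow, prod_mul_distrib,
    prod_pow_eq_pow_sum]
  exact sum_congr rfl fun m _ => by rw [m.2]; ring

theorem continuous_formR (c : Mono d n → ℝ) : Continuous (formR d n c) := by
  unfold formR; fun_prop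

theorem exists_pos_smul_mem_posSphere {x : Fin (n + 1) → ℝ} (hx : ∀ i, 0 < x i) :
    ∃ r : ℝ, 0 < r ∧ r • x ∈ posSphere n := by
  have hsum : 0 < ∑ i, x i ^ 2 := sum_pos (fun i _ => pow_pos (hx i) 2) univ_nonempty
  refine ⟨(√(∑ i, x i ^ 2))⁻¹, by positivity, ?_,
    fun i => by simpa using mul_pos (by positivity) (hx i)⟩
  simp only [Pi.smul_apply, smul_eq_mul, mul_pow, ← mul_sum, inv_pow, Real.sq_sqrt hsum.le]
  exact inv_mul_cancel₀ hsum.ne'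

theorem formR_pos_or_neg (c : Mono d n → ℝ) (h : ∀ x ∈ posSphere n, formR d n c x ≠ 0) :
    (∀ x ∈ posSphere n, 0 < formR d n c x) ∨ (∀ x ∈ posSphere n, formR d n c x < 0) := by
  set O : Set (Fin (n + 1) → ℝ) := Set.univ.pi fun _ => Set.Ioi 0
  have hO : ∀ x ∈ O, formR d n c x ≠ 0 := by
    intro x hx h0
    obtain ⟨r, hr, hrx⟩ := exists_pos_smul_mem_posSphere (by simpa [O] using hx)
    exact h _ hrx (by rw [formR_smul, h0, mul_zero])
  have hPO : posSphere n ⊆ O := fun x hx => by simpa [O] using hx.2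
  exact ((convex_pi fun _ _ => convex_Ioi 0).isPreconnected.mapsTo_Ioi_or_Iio
    (continuous_formR c).continuousOn hO).imp (fun hpos x hx => hpos (hPO hx))
    fun hneg x hx => hneg (hPO hx)

def signCone (d n : ℕ) (σ : ℝ) : Set (EuclideanSpace ℝ (Mono d n)) :=
  {c | ∀ x ∈ posSphere n, 0 ≤ σ * formR d n c x}

theorem convex_signCone (σ : ℝ) : Convex ℝ (signCone d n σ) := by
  intro b hb c hc s t hs ht _ x hx
  have := add_nonneg (mul_nonneg hs (hb x hx)) (mul_nonneg ht (hc x hx))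
  simp only [formR_eq_inner, inner_add_left, real_inner_smul_left] at this ⊢
  linarith

theorem isClosed_signCone (σ : ℝ) : IsClosed (signCone d n σ) := by
  simp only [signCone, Set.ofPred_forall, formR_eq_inner]
  exact isClosed_iInter fun x => isClosed_iInter fun _ =>
    isClosed_le continuous_const (continuous_const.mul (continuous_id.inner continuous_const))

theorem notMem_interior_signCone {σ : ℝ} (hσ : σ ≠ 0) {a : EuclideanSpace ℝ (Mono d n)}
    {x : Fin (n + 1) → ℝ} (hx : x ∈ posSphere n) (ha : formR d n a x = 0) :
    a ∉ interior (signCone d n σ) :=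
  notMem_interior_of_inner_eq_zero (w := σ • monomialVec d n x)
    (fun v hv => by simpa [real_inner_smul_right, formR_eq_inner] using hv x hx)
    (smul_ne_zero hσ (monomialVec_ne_zero hx.2))
    (by rw [real_inner_smul_right, ← formR_eq_inner, ha, mul_zero])

theorem mem_latticeNearFrontier_signCone {A : ℝ} {a : Mono d n → ℤ} (haA : ‖intPoint a‖ ≤ A)
    (ha : ∃ x ∈ posSphere n, formR d n (intPoint a) x = 0) {c : EuclideanSpace ℝ (Mono d n)}
    (hac : ‖intPoint a - c‖ ≤ 1) (hc : ∀ x ∈ posSphere n, formR d n c x ≠ 0) :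
    a ∈ latticeNearFrontier (signCone d n 1) A ∪ latticeNearFrontier (signCone d n (-1)) A := by
  obtain ⟨x, hx, hax⟩ := ha
  rcases formR_pos_or_neg c hc with hpos | hneg
  · exact .inl ⟨haA, notMem_interior_signCone one_ne_zero hx hax, c,
      fun y hy => by simpa using (hpos y hy).le, hac⟩
  · exact .inr ⟨haA, notMem_interior_signCone (by norm_num) hx hax, c,
      fun y hy => by simpa using (hneg y hy).le, hac⟩

theorem card_mono_le_choose (d n : ℕ) : Fintype.card (Mono d n) ≤ (n + d).choose d := by
  let e := Sym.equivNatSumOfFintype (Fin (n + 1)) d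
  have : Finite {P : Fin (n + 1) → ℕ // ∑ i, P i = d} := .of_equiv _ e
  calc Fintype.card (Mono d n) = Nat.card (Mono d n) := Nat.card_eq_fintype_card.symm
    _ ≤ Nat.card {P : Fin (n + 1) → ℕ // ∑ i, P i = d} :=
        Nat.card_le_card_of_injective (fun m => ⟨fun i => m.1 i, m.2⟩) fun m m' h =>
          Subtype.ext (funext fun i => Fin.ext (congrFun (congrArg Subtype.val h) i))
    _ = (n + d).choose d := by
        rw [← Nat.card_congr e, Nat.card_eq_fintype_card, Sym.card_sym_eq_choose,
          Fintype.card_fin, Nat.add_right_comm, Nat.add_sub_cancel]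

end Forms

theorem boundary_coefficient_count_general (d n : ℕ) :
    ∃ C : ℝ, 0 < C ∧ ∀ A : ℝ, 1 ≤ A →
      (Set.ncard {a : Mono d n → ℤ |
          Real.sqrt (∑ m, ((a m : ℝ)) ^ 2) ≤ A ∧
          (∃ x : Fin (n + 1) → ℝ, (∑ i, x i ^ 2) = 1 ∧ (∀ i, 0 < x i) ∧
            formR d n (fun m => (a m : ℝ)) x = 0) ∧
          (∃ c : Mono d n → ℝ, Real.sqrt (∑ m, (c m - (a m : ℝ)) ^ 2) ≤ 1 ∧
            ¬ ∃ x : Fin (n + 1) → ℝ, (∑ i, x i ^ 2) = 1 ∧ (∀ i, 0 < x i) ∧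
              formR d n c x = 0)} : ℝ)
        ≤ C * A ^ ((n + d).choose d - 1) := by
  set N := Fintype.card (Mono d n)
  refine ⟨2 * (2 * N * (8 * N + 1) * 3 ^ (N - 1)), by positivity, fun A hA => ?_⟩
  set B := fun σ : ℝ => latticeNearFrontier (signCone d n σ) A
  have hB (σ : ℝ) := ncard_latticeNearFrontier_le (convex_signCone (d := d) (n := n) σ)
    (isClosed_signCone σ) hA
  calc _ ≤ ((B 1 ∪ B (-1)).ncard : ℝ) := by
        refine Nat.cast_le.2 (Set.ncard_le_ncard ?_
          ((finite_latticeNearFrontier _ _).union (finite_latticeNearFrontier _ _)))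
        rintro a ⟨haA, ⟨x, hx1, hx2, hx0⟩, c, hc, hcz⟩
        exact mem_latticeNearFrontier_signCone
          (by simpa [EuclideanSpace.norm_eq, intPoint] using haA) ⟨x, ⟨hx1, hx2⟩, hx0⟩
          (c := WithLp.toLp 2 c)
          (by rw [norm_sub_rev]; simpa [EuclideanSpace.norm_eq, intPoint] using hc)
          fun x hx h0 => hcz ⟨x, hx.1, hx.2, h0⟩
    _ ≤ (B 1).ncard + (B (-1)).ncard := by exact_mod_cast Set.ncard_union_le _ _
    _ ≤ 2 * (2 * N * (8 * N + 1) * (3 * A) ^ (N - 1)) := by linarith [hB 1, hB (-1)]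
    _ = 2 * (2 * N * (8 * N + 1) * 3 ^ (N - 1)) * A ^ (N - 1) := by ring
    _ ≤ _ := by gcongr; exact card_mono_le_choose d n

/-- Let `d ≥ 2`, `n ≥ 3`, `N = binomial(n+d,d)`. The number of integer coefficient vectors
`a` with `‖a‖ ≤ A` such that `f_a` has a zero on `S^n` with all coordinates positive, but
some `c` within distance `1` of `a` has no such zero, is `≪ A^{N−1}`. -/
theorem boundary_coefficient_count (d n : ℕ) (hd : 2 ≤ d) (hn : 3 ≤ n) :
    ∃ C : ℝ, 0 < C ∧ ∀ A : ℝ, 1 ≤ A →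
      (Set.ncard {a : Mono d n → ℤ |
          Real.sqrt (∑ m, ((a m : ℝ)) ^ 2) ≤ A ∧
          (∃ x : Fin (n + 1) → ℝ, (∑ i, x i ^ 2) = 1 ∧ (∀ i, 0 < x i) ∧
            formR d n (fun m => (a m : ℝ)) x = 0) ∧
          (∃ c : Mono d n → ℝ, Real.sqrt (∑ m, (c m - (a m : ℝ)) ^ 2) ≤ 1 ∧
            ¬ ∃ x : Fin (n + 1) → ℝ, (∑ i, x i ^ 2) = 1 ∧ (∀ i, 0 < x i) ∧
              formR d n c x = 0)} : ℝ)
        ≤ C * A ^ ((n + d).choose d - 1) :=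
  boundary_coefficient_count_general d n
end

section
/- Let d ≥ 2, n ≥ 3, N = binomial(n+d,d), and δ ≥ 0. Define ℬ_{N,δ} as the set of a in the closed unit ball of ℝ^N such that f_a has a zero x ∈ S^n with all coordinates ≥ 0, but no zero x ∈ S^n with all coordinates > δ. Then vol(ℬ_{N,δ}) ≪ δ, with implied constant depending only on d and n. In particular, ℬ_{N,0} has Lebesgue measure zero. -/
open MeasureTheory Metric Finset Topology

section Packing

variable {E : Type*} [NormedAddCommGroup E] [NormedSpace ℝ E] [MeasurableSpace E] [BorelSpace E]
  (μ : Measure E) [μ.IsAddRightInvariant]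

theorem natCast_mul_measure_le_of_forall_add_smul_mem {T : Set E} (hT : MeasurableSet T)
    {R ρ : ℝ} (hρ : 0 < ρ) (hTR : T ⊆ closedBall 0 R) {v : E}
    (hfib : ∀ a ∈ T, ∀ s : ℝ, 0 < s → a + s • v ∈ T → s < ρ) (k : ℕ) :
    k * μ T ≤ μ (closedBall 0 (R + k * ρ * ‖v‖)) := by
  set A : ℕ → Set E := fun j => (· + -((j * ρ) • v)) ⁻¹' T
  have hA : ∀ j, μ (A j) = μ T := fun j => measure_preimage_add_right μ _ T
  have hdisj : (range k : Set ℕ).PairwiseDisjoint A := by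
    refine Pairwise.set_pairwise ((pairwise_disjoint_on A).2 fun i j hij =>
      Set.disjoint_left.2 fun a hai haj => ?_) _
    have hshift : (a + -((j * ρ) • v)) + ((j - i) * ρ) • v = a + -((i * ρ) • v) := by
      rw [sub_mul, sub_smul]; abel
    have hij' : (1 : ℝ) ≤ j - i := by
      rw [le_sub_iff_add_le']; exact_mod_cast hij
    have := hfib _ haj ((j - i) * ρ) (by nlinarith) (by rw [hshift]; exact hai)
    nlinarith
  have hsub : ∀ j ∈ range k, A j ⊆ closedBall 0 (R + k * ρ * ‖v‖) := by
    intro j hj a ha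
    have hjk : (j : ℝ) ≤ k := by exact_mod_cast (mem_range.1 hj).le
    have hb := mem_closedBall_zero_iff.1 (hTR ha)
    rw [mem_closedBall_zero_iff]
    calc ‖a‖ = ‖(a + -((j * ρ) • v)) + (j * ρ) • v‖ := by rw [neg_add_cancel_right]
      _ ≤ R + j * ρ * ‖v‖ := by
        grw [norm_add_le, hb, norm_smul, Real.norm_of_nonneg (by positivity)]
      _ ≤ R + k * ρ * ‖v‖ := by gcongr
  calc (k : ENNReal) * μ T = ∑ j ∈ range k, μ (A j) := by simp [hA]
    _ = μ (⋃ j ∈ range k, A j) :=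
      (measure_biUnion_finset hdisj fun j _ => hT.preimage (measurable_add_const _)).symm
    _ ≤ _ := measure_mono (Set.iUnion₂_subset hsub)

theorem measure_le_ofReal_mul_of_forall_add_smul_mem {T : Set E} (hT : MeasurableSet T)
    {R c δ : ℝ} (hc : 0 < c) (hδ : 0 < δ) (hδ₁ : δ ≤ 1) (hTR : T ⊆ closedBall 0 R) {v : E}
    (hfib : ∀ a ∈ T, ∀ s : ℝ, 0 < s → a + s • v ∈ T → s < c * δ) :
    μ T ≤ ENNReal.ofReal δ * μ (closedBall 0 (R + 2 * c * ‖v‖)) := by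
  set k := ⌈δ⁻¹⌉₊
  have hk : 0 < k := Nat.ceil_pos.2 (inv_pos.2 hδ)
  have hkδ : k * δ ≤ 2 := by
    have := Nat.ceil_lt_add_one (inv_nonneg.2 hδ.le) (a := δ⁻¹)
    calc (k : ℝ) * δ ≤ (δ⁻¹ + 1) * δ := by gcongr
      _ = 1 + δ := by field_simp
      _ ≤ 2 := by linarith
  have hkinv : (k : ENNReal)⁻¹ ≤ ENNReal.ofReal δ := by
    rw [← ENNReal.ofReal_natCast, ← ENNReal.ofReal_inv_of_pos (by positivity)]
    exact ENNReal.ofReal_le_ofReal (inv_le_of_inv_le₀ hδ (Nat.le_ceil _))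
  have hpack := natCast_mul_measure_le_of_forall_add_smul_mem μ hT (mul_pos hc hδ) hTR hfib k
  rw [ENNReal.mul_le_iff_le_inv (by positivity) (by simp)] at hpack
  calc μ T ≤ (k : ENNReal)⁻¹ * μ (closedBall 0 (R + k * (c * δ) * ‖v‖)) := hpack
    _ ≤ ENNReal.ofReal δ * μ (closedBall 0 (R + 2 * c * ‖v‖)) := by
      gcongr ?_ * μ (closedBall 0 (R + ?_))
      calc (k : ℝ) * (c * δ) * ‖v‖ = (k * δ) * c * ‖v‖ := by ring
        _ ≤ 2 * c * ‖v‖ := by gcongr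

end Packing

theorem ENNReal.eq_zero_of_forall_le_ofReal_mul {x : ENNReal} {C : ℝ}
    (h : ∀ δ : ℝ, 0 < δ → x ≤ ENNReal.ofReal (C * δ)) : x = 0 := by
  have hlim : Filter.Tendsto (fun δ => ENNReal.ofReal (C * δ)) (𝓝[>] 0) (𝓝 0) := by
    simpa [Function.comp_def] using
      ((ENNReal.continuous_ofReal.comp (continuous_const_mul C)).tendsto 0).mono_left
      nhdsWithin_le_nhds
  exact le_antisymm (ge_of_tendsto hlim (eventually_nhdsWithin_of_forall h)) zero_le

theorem IsCompact.isClosed_setOf_exists_le_zero {X Y : Type*} [TopologicalSpace X]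
    [TopologicalSpace Y] {K : Set Y} (hK : IsCompact K) {g : X → Y → ℝ}
    (hg : Continuous (Function.uncurry g)) : IsClosed {x | ∃ y ∈ K, g x y ≤ 0} := by
  rw [← isOpen_compl_iff, isOpen_iff_eventually]
  intro x₀ hx₀
  simp only [Set.mem_compl_iff, Set.mem_ofPred_eq, not_exists, not_and, not_le] at hx₀ ⊢
  exact hK.eventually_forall_of_forall_eventually fun y hy =>
    hg.continuousAt.eventually (lt_mem_nhds (hx₀ y hy))

section Sphere

variable {ι : Type*} [Fintype ι] {δ : ℝ}

def nonnegSphere (ι : Type*) [Fintype ι] : Set (ι → ℝ) :=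
  {x | ∑ i, x i ^ 2 = 1 ∧ ∀ i, 0 ≤ x i}

def sphereAbove (ι : Type*) [Fintype ι] (δ : ℝ) : Set (ι → ℝ) :=
  {x | ∑ i, x i ^ 2 = 1 ∧ ∀ i, δ < x i}

def coneAbove (ι : Type*) [Fintype ι] (δ : ℝ) : Set (ι → ℝ) :=
  {w | ∀ i, δ * √(∑ j, w j ^ 2) < w i}

theorem norm_le_one_of_sum_sq_le_one {x : ι → ℝ} (h : ∑ i, x i ^ 2 ≤ 1) : ‖x‖ ≤ 1 :=
  (pi_norm_le_iff_of_nonneg zero_le_one).2 fun i => by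
    rw [Real.norm_eq_abs, ← sq_le_one_iff_abs_le_one]
    exact (single_le_sum (fun j _ => sq_nonneg (x j)) (mem_univ i)).trans h

theorem isCompact_nonnegSphere : IsCompact (nonnegSphere ι) := by
  refine (isCompact_closedBall 0 1).of_isClosed_subset ?_
    fun x hx => mem_closedBall_zero_iff.2 (norm_le_one_of_sum_sq_le_one hx.1.le)
  simp only [nonnegSphere, Set.ofPred_and, Set.ofPred_forall]
  exact (isClosed_eq (by fun_prop) continuous_const).inter
    (isClosed_iInter fun i => isClosed_le continuous_const (continuous_apply i))

theorem exists_inv_card_le_of_mem_nonnegSphere [Nonempty ι] {y : ι → ℝ}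
    (hy : y ∈ nonnegSphere ι) : ∃ j, (Fintype.card ι : ℝ)⁻¹ ≤ y j := by
  have hsum : ∑ _j : ι, (Fintype.card ι : ℝ)⁻¹ ≤ ∑ j, y j ^ 2 := by
    rw [hy.1, sum_const, card_univ, nsmul_eq_mul, mul_inv_cancel₀ (by positivity)]
  obtain ⟨j, -, hj⟩ := exists_le_of_sum_le univ_nonempty hsum
  have hyj : y j ≤ 1 := by
    have := (single_le_sum (fun i _ => sq_nonneg (y i)) (mem_univ j)).trans hy.1.le
    nlinarith [hy.2 j]
  exact ⟨j, hj.trans (by nlinarith [hy.2 j])⟩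

theorem convexOn_sqrt_sum_sq : ConvexOn ℝ Set.univ fun w : ι → ℝ => √(∑ i, w i ^ 2) := by
  refine ⟨convex_univ, fun x _ y _ a b ha hb _ => ?_⟩
  have h := norm_add_le (a • WithLp.toLp 2 x) (b • WithLp.toLp 2 y)
  rw [norm_smul, norm_smul, Real.norm_of_nonneg ha, Real.norm_of_nonneg hb, ← WithLp.toLp_smul,
    ← WithLp.toLp_smul, ← WithLp.toLp_add] at h
  simpa [EuclideanSpace.norm_eq] using h

theorem convex_coneAbove (hδ : 0 ≤ δ) : Convex ℝ (coneAbove ι δ) := by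
  have : coneAbove ι δ = ⋂ i, {w | δ * √(∑ j, w j ^ 2) - w i < 0} := by
    ext w; simp [coneAbove]
  rw [this]
  refine convex_iInter fun i => ?_
  simpa using ((convexOn_sqrt_sum_sq.smul hδ).sub
    ((LinearMap.proj (R := ℝ) (φ := fun _ : ι => ℝ) i).concaveOn convex_univ)).convex_lt 0

theorem sqrt_sum_sq_pos_of_mem_coneAbove [Nonempty ι] (hδ : 0 ≤ δ) {w : ι → ℝ}
    (hw : w ∈ coneAbove ι δ) : 0 < √(∑ i, w i ^ 2) := by
  obtain ⟨i⟩ := ‹Nonempty ι›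
  have hwi : 0 < w i := (mul_nonneg hδ (Real.sqrt_nonneg _)).trans_lt (hw i)
  exact Real.sqrt_pos.2 ((pow_pos hwi 2).trans_le
    (single_le_sum (fun j _ => sq_nonneg (w j)) (mem_univ i)))

theorem inv_sqrt_smul_mem_sphereAbove [Nonempty ι] (hδ : 0 ≤ δ) {w : ι → ℝ}
    (hw : w ∈ coneAbove ι δ) : (√(∑ i, w i ^ 2))⁻¹ • w ∈ sphereAbove ι δ := by
  have hr := sqrt_sum_sq_pos_of_mem_coneAbove hδ hw
  refine ⟨?_, fun i => ?_⟩
  · simp only [Pi.smul_apply, smul_eq_mul, mul_pow, ← mul_sum, inv_pow,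
      Real.sq_sqrt (sum_nonneg fun j _ => sq_nonneg (w j))]
    exact inv_mul_cancel₀ (Real.sqrt_pos.1 hr).ne'
  · rw [Pi.smul_apply, smul_eq_mul, lt_inv_mul_iff₀ hr, mul_comm]
    exact hw i

theorem sphereAbove_subset_coneAbove : sphereAbove ι δ ⊆ coneAbove ι δ := fun x hx i => by
  simpa [hx.1] using hx.2 i

theorem isPreconnected_sphereAbove [Nonempty ι] (hδ : 0 ≤ δ) :
    IsPreconnected (sphereAbove ι δ) := by
  have himage : (fun w : ι → ℝ => (√(∑ i, w i ^ 2))⁻¹ • w) '' coneAbove ι δ = sphereAbove ι δ := by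
    refine subset_antisymm (Set.image_subset_iff.2 fun w hw => inv_sqrt_smul_mem_sphereAbove hδ hw)
      fun x hx => ⟨x, sphereAbove_subset_coneAbove hx, by simp [hx.1]⟩
  rw [← himage]
  refine (convex_coneAbove hδ).isPreconnected.image _ (ContinuousOn.fun_smul ?_ continuousOn_id)
  exact ContinuousOn.inv₀ (by fun_prop) fun w hw => (sqrt_sum_sq_pos_of_mem_coneAbove hδ hw).ne'

theorem add_const_mem_coneAbove {y : ι → ℝ} (hy : y ∈ nonnegSphere ι) (hδ : 0 < δ)
    (hδ₀ : 4 * Fintype.card ι * δ ≤ 1) : (fun j => y j + 2 * δ) ∈ coneAbove ι δ := by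
  intro i
  beta_reduce
  have hcard : (1 : ℝ) ≤ Fintype.card ι := by exact_mod_cast Fintype.card_pos_iff.2 ⟨i⟩
  have hsum : ∑ j, (y j + 2 * δ) ^ 2 < 2 ^ 2 :=
    calc ∑ j, (y j + 2 * δ) ^ 2 ≤ ∑ j, (2 * y j ^ 2 + 8 * δ ^ 2) :=
          sum_le_sum fun j _ => by nlinarith [sq_nonneg (y j - 2 * δ)]
      _ = 2 + 2 * δ * (4 * Fintype.card ι * δ) := by
          rw [sum_add_distrib, ← mul_sum, hy.1, sum_const, card_univ, nsmul_eq_mul]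
          ring
      _ < 2 ^ 2 := by nlinarith
  have hsqrt : √(∑ j, (y j + 2 * δ) ^ 2) < 2 := (Real.sqrt_lt' two_pos).2 hsum
  nlinarith [hy.2 i]

end Sphere

section Form

variable {d n : ℕ}

theorem formR_add_left (a b : Mono d n → ℝ) (x : Fin (n + 1) → ℝ) :
    formR d n (a + b) x = formR d n a x + formR d n b x := by
  simp only [formR, Pi.add_apply, add_mul, sum_add_distrib]

theorem formR_smul_left (c : ℝ) (a : Mono d n → ℝ) (x : Fin (n + 1) → ℝ) :
    formR d n (c • a) x = c * formR d n a x := by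
  simp only [formR, Pi.smul_apply, smul_eq_mul, mul_sum, mul_assoc]

theorem formR_neg_left (a : Mono d n → ℝ) (x : Fin (n + 1) → ℝ) :
    formR d n (-a) x = -formR d n a x := by
  simpa using formR_smul_left (-1) a x

theorem formR_smul_right (a : Mono d n → ℝ) (c : ℝ) (x : Fin (n + 1) → ℝ) :
    formR d n a (c • x) = c ^ d * formR d n a x := by
  simp only [formR, Pi.smul_apply, smul_eq_mul, mul_pow, prod_mul_distrib, prod_pow_eq_pow_sum,
    mul_sum]
  refine sum_congr rfl fun m _ => ?_
  rw [m.2]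
  ring

theorem contDiff_formR : ContDiff ℝ 1 fun p : (Mono d n → ℝ) × (Fin (n + 1) → ℝ) =>
    formR d n p.1 p.2 := by
  unfold formR
  fun_prop

theorem exists_lipschitz_formR (R : ℝ) : ∃ L : ℝ, 0 ≤ L ∧ ∀ a : Mono d n → ℝ, ‖a‖ ≤ 1 →
    ∀ x ∈ closedBall (0 : Fin (n + 1) → ℝ) R, ∀ y ∈ closedBall (0 : Fin (n + 1) → ℝ) R,
      |formR d n a x - formR d n a y| ≤ L * ‖x - y‖ := by
  obtain ⟨L, hL⟩ := contDiff_formR.contDiffOn.exists_lipschitzOnWith one_ne_zero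
    (convex_closedBall 0 (max 1 R)) (isCompact_closedBall 0 (max 1 R))
  refine ⟨L, L.2, fun a ha x hx y hy => ?_⟩
  have hmem : ∀ z ∈ closedBall (0 : Fin (n + 1) → ℝ) R, (a, z) ∈ closedBall 0 (max 1 R) :=
    fun z hz => mem_closedBall_zero_iff.2 <| by
      rw [Prod.norm_mk]
      exact max_le_max ha (mem_closedBall_zero_iff.1 hz)
  simpa [Real.dist_eq, Prod.dist_eq, dist_eq_norm] using hL.dist_le_mul _ (hmem x hx) _ (hmem y hy)

theorem pow_le_formR_one {x : Fin (n + 1) → ℝ} (hx : ∀ i, 0 ≤ x i) (j : Fin (n + 1)) :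
    x j ^ d ≤ formR d n 1 x := by
  let pureMono : Mono d n := ⟨fun i => if i = j then Fin.last d else 0, by simp [apply_ite Fin.val]⟩
  have hterm : x j ^ d = 1 * ∏ i, x i ^ (pureMono.1 i : ℕ) := by
    simp [pureMono, apply_ite Fin.val, pow_ite]
  rw [hterm]
  exact single_le_sum (f := fun m : Mono d n => (1 : Mono d n → ℝ) m * ∏ i, x i ^ (m.1 i : ℕ))
    (fun m _ => by simpa using prod_nonneg fun i _ => pow_nonneg (hx i) _) (mem_univ pureMono)

theorem formR_nonneg_of_mem_coneAbove {a : Mono d n → ℝ} {δ : ℝ} (hδ : 0 ≤ δ)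
    (ha : ∀ x ∈ sphereAbove (Fin (n + 1)) δ, 0 ≤ formR d n a x) {w : Fin (n + 1) → ℝ}
    (hw : w ∈ coneAbove (Fin (n + 1)) δ) : 0 ≤ formR d n a w := by
  have hr := sqrt_sum_sq_pos_of_mem_coneAbove hδ hw
  rw [← smul_inv_smul₀ hr.ne' w, formR_smul_right]
  exact mul_nonneg (by positivity) (ha _ (inv_sqrt_smul_mem_sphereAbove hδ hw))

theorem one_le_mul_formR_one {y w : Fin (n + 1) → ℝ} (hy : y ∈ nonnegSphere (Fin (n + 1)))
    (hyw : ∀ i, y i ≤ w i) : 1 ≤ ((n : ℝ) + 1) ^ d * formR d n 1 w := by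
  obtain ⟨j, hj⟩ := exists_inv_card_le_of_mem_nonnegSphere hy
  rw [Fintype.card_fin, Nat.cast_add_one] at hj
  have hwj : 1 ≤ ((n : ℝ) + 1) * w j := by
    rw [← inv_le_iff_one_le_mul₀' (by positivity)]
    exact hj.trans (hyw j)
  calc (1 : ℝ) ≤ (((n : ℝ) + 1) * w j) ^ d := one_le_pow₀ hwj
    _ = ((n : ℝ) + 1) ^ d * w j ^ d := mul_pow _ _ _
    _ ≤ ((n : ℝ) + 1) ^ d * formR d n 1 w := by
      gcongr
      exact pow_le_formR_one (fun i => (hy.2 i).trans (hyw i)) j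

end Form

section BoundarySet

variable (d n : ℕ)

def boundarySet (δ : ℝ) : Set (Mono d n → ℝ) :=
  {a | (∑ m, (a m) ^ 2) ≤ 1 ∧
    (∃ x : Fin (n + 1) → ℝ, (∑ i, x i ^ 2) = 1 ∧ (∀ i, 0 ≤ x i) ∧ formR d n a x = 0) ∧
    ¬ (∃ x : Fin (n + 1) → ℝ, (∑ i, x i ^ 2) = 1 ∧ (∀ i, δ < x i) ∧ formR d n a x = 0)}

def nonnegBoundarySet (δ : ℝ) : Set (Mono d n → ℝ) :=
  {a | ∑ m, a m ^ 2 ≤ 1 ∧ (∃ y ∈ nonnegSphere (Fin (n + 1)), formR d n a y ≤ 0) ∧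
    ∀ x ∈ sphereAbove (Fin (n + 1)) δ, 0 ≤ formR d n a x}

variable {d n}

theorem boundarySet_mono {δ δ' : ℝ} (h : δ ≤ δ') : boundarySet d n δ ⊆ boundarySet d n δ' :=
  fun _ ⟨hball, hzero, hnot⟩ => ⟨hball, hzero, fun ⟨x, hx, hδ', hfx⟩ =>
    hnot ⟨x, hx, fun i => h.trans_lt (hδ' i), hfx⟩⟩

theorem boundarySet_subset {δ : ℝ} (hδ : 0 ≤ δ) :
    boundarySet d n δ ⊆ nonnegBoundarySet d n δ ∪ -nonnegBoundarySet d n δ := by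
  rintro a ⟨hball, ⟨y, hy, hy₀, hfy⟩, hnot⟩
  have hcont : ContinuousOn (formR d n a) (sphereAbove (Fin (n + 1)) δ) :=
    (contDiff_formR.continuous.comp (Continuous.prodMk_right a)).continuousOn
  by_cases hsign : ∀ x ∈ sphereAbove (Fin (n + 1)) δ, 0 ≤ formR d n a x
  · exact Or.inl ⟨hball, ⟨y, ⟨hy, hy₀⟩, hfy.le⟩, hsign⟩
  push Not at hsign
  obtain ⟨p, hp, hfp⟩ := hsign
  refine Or.inr ⟨by simpa using hball, ⟨y, ⟨hy, hy₀⟩, by simp [formR_neg_left, hfy]⟩,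
    fun q hq => ?_⟩
  rw [formR_neg_left, neg_nonneg]
  by_contra! hfq
  obtain ⟨z, hz, hfz⟩ := (isPreconnected_sphereAbove hδ).intermediate_value hp hq hcont
    ⟨hfp.le, hfq.le⟩
  exact hnot ⟨z, hz.1, hz.2, hfz⟩

theorem isClosed_nonnegBoundarySet (δ : ℝ) : IsClosed (nonnegBoundarySet d n δ) := by
  have hcont : Continuous fun p : (Mono d n → ℝ) × (Fin (n + 1) → ℝ) => formR d n p.1 p.2 :=
    contDiff_formR.continuous
  refine (isClosed_le (g := fun _ => (1 : ℝ)) (by fun_prop) continuous_const).inter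
    ((isCompact_nonnegSphere.isClosed_setOf_exists_le_zero (g := formR d n) hcont).inter ?_)
  change IsClosed {a | ∀ x ∈ sphereAbove (Fin (n + 1)) δ, 0 ≤ formR d n a x}
  simp only [Set.ofPred_forall]
  exact isClosed_biInter fun x _ =>
    isClosed_le continuous_const (hcont.comp (Continuous.prodMk_left x))

theorem exists_lt_mul_of_add_smul_one_mem : ∃ c > 0, ∀ δ : ℝ, 0 < δ → 4 * (n + 1) * δ ≤ 1 →
    ∀ a ∈ nonnegBoundarySet d n δ, ∀ s : ℝ, 0 < s →
      a + s • (1 : Mono d n → ℝ) ∈ nonnegBoundarySet d n δ → s < c * δ := by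
  obtain ⟨L, hL₀, hL⟩ := exists_lipschitz_formR (d := d) (n := n) 2
  refine ⟨2 * L * ((n : ℝ) + 1) ^ d + 1, by positivity,
    fun δ hδ hδ₀ a ha s hs ⟨hball, ⟨y, hy, hfy⟩, _⟩ => ?_⟩
  set w : Fin (n + 1) → ℝ := fun j => y j + 2 * δ
  have hyw : ∀ i, y i ≤ w i := fun i => by simp only [w]; linarith
  have hy₁ : ‖y‖ ≤ 1 := norm_le_one_of_sum_sq_le_one hy.1.le
  have hwy : ‖w - y‖ ≤ 2 * δ := (pi_norm_le_iff_of_nonneg (by positivity)).2 fun i => by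
    simp [w, abs_of_pos hδ]
  have hw₂ : ‖w‖ ≤ 2 := by
    have : 2 * δ ≤ 1 := by nlinarith
    linarith [norm_le_norm_add_norm_sub' w y]
  have hfw : 0 ≤ formR d n a w := formR_nonneg_of_mem_coneAbove hδ.le ha.2.2
    (add_const_mem_coneAbove hy hδ (by simpa using hδ₀))
  have hLip := hL _ (norm_le_one_of_sum_sq_le_one hball) w (mem_closedBall_zero_iff.2 hw₂) y
    (mem_closedBall_zero_iff.2 (by linarith))
  have hsw : s * formR d n 1 w ≤ 2 * L * δ := by
    have hsplit := formR_add_left a (s • 1) w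
    rw [formR_smul_left] at hsplit
    nlinarith [abs_le.1 hLip, mul_le_mul_of_nonneg_left hwy hL₀]
  calc s ≤ s * (((n : ℝ) + 1) ^ d * formR d n 1 w) :=
        le_mul_of_one_le_right hs.le (one_le_mul_formR_one hy hyw)
    _ = ((n : ℝ) + 1) ^ d * (s * formR d n 1 w) := by ring
    _ ≤ ((n : ℝ) + 1) ^ d * (2 * L * δ) := by gcongr
    _ < (2 * L * ((n : ℝ) + 1) ^ d + 1) * δ := by nlinarith

theorem exists_volume_boundarySet_le :
    ∃ C > 0, ∀ δ : ℝ, 0 < δ → volume (boundarySet d n δ) ≤ ENNReal.ofReal (C * δ) := by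
  obtain ⟨c, hc, hfib⟩ := exists_lt_mul_of_add_smul_one_mem (d := d) (n := n)
  set B := closedBall (0 : Mono d n → ℝ) (1 + 2 * c * ‖(1 : Mono d n → ℝ)‖)
  set M := (volume B).toReal
  have hM : volume B = ENNReal.ofReal M :=
    (ENNReal.ofReal_toReal measure_closedBall_lt_top.ne).symm
  have hM₀ : 0 ≤ M := ENNReal.toReal_nonneg
  have hunit : closedBall (0 : Mono d n → ℝ) 1 ⊆ B :=
    closedBall_subset_closedBall (le_add_of_nonneg_right (by positivity))
  have hnorm : ∀ a : Mono d n → ℝ, ∑ m, a m ^ 2 ≤ 1 → a ∈ closedBall 0 1 :=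
    fun a ha => mem_closedBall_zero_iff.2 (norm_le_one_of_sum_sq_le_one ha)
  set C := 4 * ((n : ℝ) + 1) * (M + 1)
  have hn : (0 : ℝ) ≤ n := Nat.cast_nonneg n
  refine ⟨C, by positivity, fun δ hδ => ?_⟩
  rcases le_or_gt (4 * ((n : ℝ) + 1) * δ) 1 with hδ₀ | hδ₀
  · have hT := measure_le_ofReal_mul_of_forall_add_smul_mem volume
      (isClosed_nonnegBoundarySet δ).measurableSet hc hδ (by nlinarith)
      (fun a ha => hnorm a ha.1) (hfib δ hδ hδ₀)
    change _ ≤ _ * volume B at hT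
    rw [hM] at hT
    calc volume (boundarySet d n δ)
        ≤ volume (nonnegBoundarySet d n δ ∪ -nonnegBoundarySet d n δ) :=
          measure_mono (boundarySet_subset hδ.le)
      _ ≤ volume (nonnegBoundarySet d n δ) + volume (-nonnegBoundarySet d n δ) :=
          measure_union_le _ _
      _ ≤ ENNReal.ofReal δ * ENNReal.ofReal M + ENNReal.ofReal δ * ENNReal.ofReal M := by
          rw [Measure.measure_neg]
          exact add_le_add hT hT
      _ = ENNReal.ofReal (2 * M * δ) := by
          rw [← ENNReal.ofReal_mul hδ.le, ← ENNReal.ofReal_add (by positivity) (by positivity)]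
          ring_nf
      _ ≤ ENNReal.ofReal (C * δ) := ENNReal.ofReal_le_ofReal (by gcongr; nlinarith)
  · calc volume (boundarySet d n δ) ≤ volume B :=
          measure_mono fun a ha => hunit (hnorm a ha.1)
      _ = ENNReal.ofReal M := hM
      _ ≤ ENNReal.ofReal (C * δ) := ENNReal.ofReal_le_ofReal (by nlinarith)

end BoundarySet

theorem boundary_set_volume_general (d n : ℕ) :
    ∃ C : ℝ, 0 < C ∧ ∀ δ : ℝ, 0 ≤ δ →
      MeasureTheory.volume {a : Mono d n → ℝ |
          (∑ m, (a m) ^ 2) ≤ 1 ∧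
          (∃ x : Fin (n + 1) → ℝ, (∑ i, x i ^ 2) = 1 ∧ (∀ i, 0 ≤ x i) ∧
            formR d n a x = 0) ∧
          ¬ (∃ x : Fin (n + 1) → ℝ, (∑ i, x i ^ 2) = 1 ∧ (∀ i, δ < x i) ∧
            formR d n a x = 0)}
        ≤ ENNReal.ofReal (C * δ) := by
  obtain ⟨C, hC, hbound⟩ := exists_volume_boundarySet_le (d := d) (n := n)
  refine ⟨C, hC, fun δ hδ => ?_⟩
  rcases hδ.eq_or_lt with rfl | hδ
  · have hzero : volume (boundarySet d n 0) = 0 := ENNReal.eq_zero_of_forall_le_ofReal_mul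
      fun δ hδ => (measure_mono (boundarySet_mono hδ.le)).trans (hbound δ hδ)
    exact hzero.trans_le zero_le
  · exact hbound δ hδ

/-- Let `d ≥ 2`, `n ≥ 3`, `δ ≥ 0`. The set of coefficient vectors `a` in the closed unit
ball of `ℝ^{N_{d,n}}` such that `f_a` has a zero on `S^n` with all coordinates `≥ 0` but
no zero on `S^n` with all coordinates `> δ` has Lebesgue measure `≪ δ`, with implied
constant depending only on `d` and `n`. In particular for `δ = 0` it has measure zero. -/
theorem boundary_set_volume (d n : ℕ) (hd : 2 ≤ d) (hn : 3 ≤ n) :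
    ∃ C : ℝ, 0 < C ∧ ∀ δ : ℝ, 0 ≤ δ →
      MeasureTheory.volume {a : Mono d n → ℝ |
          (∑ m, (a m) ^ 2) ≤ 1 ∧
          (∃ x : Fin (n + 1) → ℝ, (∑ i, x i ^ 2) = 1 ∧ (∀ i, 0 ≤ x i) ∧
            formR d n a x = 0) ∧
          ¬ (∃ x : Fin (n + 1) → ℝ, (∑ i, x i ^ 2) = 1 ∧ (∀ i, δ < x i) ∧
            formR d n a x = 0)}
        ≤ ENNReal.ofReal (C * δ) :=
  boundary_set_volume_general d n
end

section
/- Let β > 0 and s₁, s₂ ≥ 1. Then ∑ τ(xz − yw) ≪ s₁²s₂²(log(s₁s₂ + 2))⁴, where the sum is over integers x, y with 1 ≤ |x|, |y| ≤ βs₁ and z, w with 1 ≤ |z|, |w| ≤ βs₂ satisfying xz − yw ≠ 0, and τ is the divisor function. The implied constant depends only on β. -/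
/-!
Group the pairs `(x, z)` and `(y, w)` by their products `u = xz`, `v = yw`: a nonzero `u` with
`|u| ≤ M := ⌈βs₁⌉₊⌈βs₂⌉₊` arises from at most `2τ(u)` pairs, so the sum is at most
`4 ∑_{u,v} τ(u)τ(v)τ(u - v)` over `0 < |u|, |v| ≤ M`. Since `τ(u - v)` is symmetric in `u` and `v`,
`τ(u)τ(v) ≤ (τ(u)² + τ(v)²)/2` bounds this by `∑_u τ(u)² ∑_v τ(u - v)`, and the classical estimates
`∑_{n ≤ N} τ(n) ≤ N(1 + log N)` and `∑_{n ≤ N} τ(n)² ≤ N(1 + log N)³` give `O(M² (log M)⁴)`.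
The second estimate comes from `τ(n)² = #{(d, e) : lcm d e ∣ n}` and
`∑_{d, e ≤ N} 1 / lcm d e ≤ (∑_{d ≤ N} 1 / d)³`, via `(d, e) ↦ (gcd d e, d / gcd d e, e / gcd d e)`.
-/

open Finset

namespace Nat

theorem sum_card_filter_dvd {ι : Type*} (s : Finset ι) (f : ι → ℕ) (N : ℕ) :
    ∑ n ∈ Ioc 0 N, #{i ∈ s | f i ∣ n} = ∑ i ∈ s, N / f i :=
  (sum_card_bipartiteAbove_eq_sum_card_bipartiteBelow (fun n i ↦ f i ∣ n)).trans
    (sum_congr rfl fun i _ ↦ Ioc_filter_dvd_card_eq_div N (f i))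

theorem divisors_eq_filter_dvd_Ioc {n N : ℕ} (hn : n ∈ Ioc 0 N) :
    n.divisors = {d ∈ Ioc 0 N | d ∣ n} := by
  ext d
  simp only [mem_divisors, mem_filter, mem_Ioc] at hn ⊢
  exact ⟨fun ⟨hd, _⟩ ↦ ⟨⟨pos_of_dvd_of_pos hd hn.1, (le_of_dvd hn.1 hd).trans hn.2⟩, hd⟩,
    fun ⟨_, hd⟩ ↦ ⟨hd, hn.1.ne'⟩⟩

theorem sum_card_divisors_eq_sum_div (N : ℕ) :
    ∑ n ∈ Ioc 0 N, #n.divisors = ∑ d ∈ Ioc 0 N, N / d :=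
  (sum_congr rfl fun n hn ↦ by rw [divisors_eq_filter_dvd_Ioc hn]; rfl).trans
    (sum_card_filter_dvd _ id N)

theorem sum_card_divisors_sq_eq_sum_div_lcm_s17 (N : ℕ) :
    ∑ n ∈ Ioc 0 N, #n.divisors ^ 2 = ∑ p ∈ Ioc 0 N ×ˢ Ioc 0 N, N / p.1.lcm p.2 := by
  rw [← sum_card_filter_dvd]
  refine sum_congr rfl fun n hn ↦ ?_
  simp only [lcm_dvd_iff]
  rw [filter_product (· ∣ n) (· ∣ n), card_product, divisors_eq_filter_dvd_Ioc hn, sq]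

theorem sum_Ioc_inv_le_one_add_log (N : ℕ) : ∑ d ∈ Ioc 0 N, (d : ℝ)⁻¹ ≤ 1 + Real.log N := by
  have h := harmonic_le_one_add_log N
  rw [harmonic_eq_sum_Icc] at h
  push_cast at h
  rwa [← Icc_add_one_left_eq_Ioc, zero_add]

theorem sum_cast_div_le_mul_sum_inv {ι : Type*} (s : Finset ι) (f : ι → ℕ) (N : ℕ) :
    ∑ i ∈ s, ((N / f i : ℕ) : ℝ) ≤ N * ∑ i ∈ s, (f i : ℝ)⁻¹ := by
  rw [mul_sum]
  exact sum_le_sum fun i _ ↦ Nat.cast_div_le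

theorem lcm_eq_gcd_mul_div_mul_div (m n : ℕ) :
    m.lcm n = m.gcd n * (m / m.gcd n) * (n / m.gcd n) := by
  rw [Nat.mul_div_cancel' (gcd_dvd_left m n), lcm, Nat.mul_div_assoc _ (gcd_dvd_right m n)]

theorem sum_inv_lcm_le (N : ℕ) :
    ∑ p ∈ Ioc 0 N ×ˢ Ioc 0 N, ((p.1.lcm p.2 : ℕ) : ℝ)⁻¹ ≤ (∑ d ∈ Ioc 0 N, (d : ℝ)⁻¹) ^ 3 := by
  set I := Ioc 0 N
  let ψ : ℕ × ℕ → ℕ × ℕ × ℕ := fun p ↦ (p.1.gcd p.2, p.1 / p.1.gcd p.2, p.2 / p.1.gcd p.2)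
  let F : ℕ × ℕ × ℕ → ℝ := fun q ↦ ((q.1 : ℝ) * q.2.1 * q.2.2)⁻¹
  have hψ_inv : ∀ p, ((ψ p).1 * (ψ p).2.1, (ψ p).1 * (ψ p).2.2) = p := fun p ↦
    Prod.ext (Nat.mul_div_cancel' (gcd_dvd_left _ _)) (Nat.mul_div_cancel' (gcd_dvd_right _ _))
  have hψ_inj : Set.InjOn ψ ↑(I ×ˢ I) := fun p _ q _ h ↦ by rw [← hψ_inv p, h, hψ_inv]
  have hψ_maps : (I ×ˢ I).image ψ ⊆ I ×ˢ I ×ˢ I := by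
    simp only [subset_iff, mem_image, mem_product, mem_Ioc, I, ψ]
    rintro _ ⟨p, ⟨⟨hp₁, hN₁⟩, hp₂, hN₂⟩, rfl⟩
    have hg := gcd_pos_of_pos_left p.2 hp₁
    exact ⟨⟨hg, (gcd_le_left _ hp₁).trans hN₁⟩,
      ⟨div_pos (gcd_le_left _ hp₁) hg, (div_le_self _ _).trans hN₁⟩,
      div_pos (gcd_le_right _ hp₂) hg, (div_le_self _ _).trans hN₂⟩
  calc ∑ p ∈ I ×ˢ I, ((p.1.lcm p.2 : ℕ) : ℝ)⁻¹ = ∑ p ∈ I ×ˢ I, F (ψ p) := by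
        simp only [F, ψ, lcm_eq_gcd_mul_div_mul_div, cast_mul]
    _ = ∑ q ∈ (I ×ˢ I).image ψ, F q := (sum_image hψ_inj).symm
    _ ≤ ∑ q ∈ I ×ˢ I ×ˢ I, F q := sum_le_sum_of_subset_of_nonneg hψ_maps fun _ _ _ ↦ by positivity
    _ = (∑ d ∈ I, (d : ℝ)⁻¹) ^ 3 := by
        simp only [F, sum_product, mul_inv, ← mul_sum, ← sum_mul]
        ring

theorem sum_card_divisors_le (N : ℕ) :
    ∑ n ∈ Ioc 0 N, (#n.divisors : ℝ) ≤ N * (1 + Real.log N) := by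
  calc ∑ n ∈ Ioc 0 N, (#n.divisors : ℝ) = ∑ d ∈ Ioc 0 N, ((N / d : ℕ) : ℝ) := by
        exact_mod_cast sum_card_divisors_eq_sum_div N
    _ ≤ N * ∑ d ∈ Ioc 0 N, (d : ℝ)⁻¹ := sum_cast_div_le_mul_sum_inv _ id N
    _ ≤ N * (1 + Real.log N) := by gcongr; exact sum_Ioc_inv_le_one_add_log N

theorem sum_card_divisors_sq_le_s17 (N : ℕ) :
    ∑ n ∈ Ioc 0 N, (#n.divisors : ℝ) ^ 2 ≤ N * (1 + Real.log N) ^ 3 := by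
  calc ∑ n ∈ Ioc 0 N, (#n.divisors : ℝ) ^ 2
        = ∑ p ∈ Ioc 0 N ×ˢ Ioc 0 N, ((N / p.1.lcm p.2 : ℕ) : ℝ) := by
        exact_mod_cast sum_card_divisors_sq_eq_sum_div_lcm_s17 N
    _ ≤ N * ∑ p ∈ Ioc 0 N ×ˢ Ioc 0 N, ((p.1.lcm p.2 : ℕ) : ℝ)⁻¹ :=
        sum_cast_div_le_mul_sum_inv _ _ N
    _ ≤ N * (∑ d ∈ Ioc 0 N, (d : ℝ)⁻¹) ^ 3 := by gcongr; exact sum_inv_lcm_le N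
    _ ≤ N * (1 + Real.log N) ^ 3 := by
        gcongr
        exact sum_Ioc_inv_le_one_add_log N

end Nat

theorem Int.card_divisors (z : ℤ) : #z.divisors = 2 * #z.natAbs.divisors := by
  rw [Int.divisors, card_disjUnion, card_map, card_map, two_mul]

theorem Int.card_filter_mul_eq_le (s : Finset (ℤ × ℤ)) {z : ℤ} (hz : z ≠ 0) :
    #{p ∈ s | p.1 * p.2 = z} ≤ 2 * #z.natAbs.divisors := by
  rw [← Int.card_divisors]
  refine card_le_card_of_injOn Prod.fst (fun p hp ↦ ?_) fun p hp q hq h ↦ ?_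
  · simp only [coe_filter, Set.mem_ofPred_eq] at hp
    exact Int.mem_divisors.2 ⟨⟨p.2, hp.2.symm⟩, hz⟩
  · simp only [coe_filter, Set.mem_ofPred_eq] at hp hq
    have hp₁ : p.1 ≠ 0 := left_ne_zero_of_mul (hp.2 ▸ hz)
    exact Prod.ext h (mul_left_cancel₀ hp₁ (hp.2.trans (h ▸ hq.2.symm)))

theorem sum_comp_le_sum_mul_of_card_fiber_le {ι κ R : Type*} [DecidableEq κ] [Semiring R]
    [PartialOrder R] [IsOrderedRing R] {s : Finset ι} {t : Finset κ} {g : ι → κ} {f c : κ → R}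
    (hg : ∀ i ∈ s, g i ∈ t) (hc : ∀ j ∈ t, (#{i ∈ s | g i = j} : R) ≤ c j)
    (hf : ∀ j ∈ t, 0 ≤ f j) :
    ∑ i ∈ s, f (g i) ≤ ∑ j ∈ t, c j * f j := by
  rw [← sum_fiberwise_of_maps_to hg]
  refine sum_le_sum fun j hj ↦ ?_
  calc ∑ i ∈ s with g i = j, f (g i) = #{i ∈ s | g i = j} * f j := by
        rw [sum_congr rfl fun i hi ↦ by rw [(mem_filter.1 hi).2], sum_const, nsmul_eq_mul]
    _ ≤ c j * f j := mul_le_mul_of_nonneg_right (hc j hj) (hf j hj)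

theorem Int.sum_Icc_natAbs_le {R : Type*} [Semiring R] [PartialOrder R] [IsOrderedRing R]
    (K : ℕ) {f : ℕ → R} (hf₀ : f 0 = 0) (hf : ∀ n, 0 ≤ f n) :
    ∑ d ∈ Icc (-K : ℤ) K, f d.natAbs ≤ 2 * ∑ n ∈ Ioc 0 K, f n := by
  rw [← sum_erase (a := 0) _ (by simpa using hf₀), mul_sum]
  refine sum_comp_le_sum_mul_of_card_fiber_le (fun d hd ↦ ?_) (fun n _ ↦ ?_) fun n _ ↦ hf n
  · simp only [mem_erase, mem_Icc, mem_Ioc] at hd ⊢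
    omega
  · have hfiber : {d ∈ (Icc (-K : ℤ) K).erase 0 | d.natAbs = n} ⊆ {(n : ℤ), -(n : ℤ)} := by
      intro d hd
      simp only [mem_filter, mem_insert, mem_singleton] at hd ⊢
      omega
    exact (Nat.mono_cast ((card_le_card hfiber).trans card_le_two)).trans_eq Nat.cast_two

theorem sum_sum_mul_mul_sub_le {G R : Type*} [AddCommGroup G] [CommRing R] [LinearOrder R]
    [IsStrictOrderedRing R] (V : Finset G) (f g : G → R) (hg : ∀ d, 0 ≤ g d)
    (hg_neg : ∀ d, g (-d) = g d) :
    ∑ u ∈ V, ∑ v ∈ V, f u * f v * g (u - v) ≤ ∑ u ∈ V, f u ^ 2 * ∑ v ∈ V, g (u - v) := by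
  have hswap : ∑ u ∈ V, ∑ v ∈ V, f v ^ 2 * g (u - v) = ∑ u ∈ V, ∑ v ∈ V, f u ^ 2 * g (u - v) := by
    rw [sum_comm]
    exact sum_congr rfl fun u _ ↦ sum_congr rfl fun v _ ↦ by rw [← neg_sub, hg_neg]
  have hamgm : 2 * ∑ u ∈ V, ∑ v ∈ V, f u * f v * g (u - v)
      ≤ ∑ u ∈ V, ∑ v ∈ V, (f u ^ 2 * g (u - v) + f v ^ 2 * g (u - v)) := by
    simp only [mul_sum]
    gcongr with u _ v _
    nlinarith [two_mul_le_add_sq (f u) (f v), hg (u - v)]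
  simp only [sum_add_distrib, hswap] at hamgm
  simp only [mul_sum]
  linarith

theorem Int.sum_Icc_card_divisors_le (K : ℕ) :
    ∑ d ∈ Icc (-K : ℤ) K, (#d.natAbs.divisors : ℝ) ≤ 2 * (K * (1 + Real.log K)) :=
  (sum_Icc_natAbs_le (f := fun n ↦ (#n.divisors : ℝ)) K (by simp) fun _ ↦ by positivity).trans
    (by gcongr; exact Nat.sum_card_divisors_le K)

theorem Int.sum_Icc_card_divisors_sq_le (K : ℕ) :
    ∑ d ∈ Icc (-K : ℤ) K, (#d.natAbs.divisors : ℝ) ^ 2 ≤ 2 * (K * (1 + Real.log K) ^ 3) :=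
  (sum_Icc_natAbs_le (f := fun n ↦ (#n.divisors : ℝ) ^ 2) K (by simp) fun _ ↦ by positivity).trans
    (by gcongr; exact Nat.sum_card_divisors_sq_le_s17 K)

theorem sum_sum_card_divisors_mul_mul_sub_le (M : ℕ) {V : Finset ℤ} (hV : V ⊆ Icc (-M : ℤ) M) :
    ∑ u ∈ V, ∑ v ∈ V,
        (#u.natAbs.divisors : ℝ) * #v.natAbs.divisors * #(u - v).natAbs.divisors
      ≤ 16 * M ^ 2 * (1 + Real.log (2 * M)) ^ 4 := by
  set τ : ℤ → ℝ := fun d ↦ #d.natAbs.divisors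
  set K := 2 * M
  have hV' : V ⊆ Icc (-K : ℤ) K := hV.trans (Icc_subset_Icc (by omega) (by omega))
  have hinner : ∀ u ∈ V, ∑ v ∈ V, τ (u - v) ≤ 2 * (K * (1 + Real.log K)) := by
    intro u hu
    have hmaps : V.image (u - ·) ⊆ Icc (-K : ℤ) K := by
      intro d hd
      obtain ⟨v, hv, rfl⟩ := mem_image.1 hd
      have := mem_Icc.1 (hV hu)
      have := mem_Icc.1 (hV hv)
      rw [mem_Icc]
      omega
    calc ∑ v ∈ V, τ (u - v) = ∑ d ∈ V.image (u - ·), τ d :=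
          (sum_image fun _ _ _ _ h ↦ sub_right_injective h).symm
      _ ≤ ∑ d ∈ Icc (-K : ℤ) K, τ d :=
          sum_le_sum_of_subset_of_nonneg hmaps fun _ _ _ ↦ by positivity
      _ ≤ 2 * (K * (1 + Real.log K)) := Int.sum_Icc_card_divisors_le K
  have hsq : ∑ u ∈ V, τ u ^ 2 ≤ 2 * (K * (1 + Real.log K) ^ 3) :=
    (sum_le_sum_of_subset_of_nonneg hV' fun _ _ _ ↦ by positivity).trans
      (Int.sum_Icc_card_divisors_sq_le K)
  calc ∑ u ∈ V, ∑ v ∈ V, τ u * τ v * τ (u - v)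
      ≤ ∑ u ∈ V, τ u ^ 2 * ∑ v ∈ V, τ (u - v) :=
        sum_sum_mul_mul_sub_le V τ τ (fun _ ↦ by positivity) fun d ↦ by simp [τ]
    _ ≤ ∑ u ∈ V, τ u ^ 2 * (2 * (K * (1 + Real.log K))) := by
        gcongr with u hu
        exact hinner u hu
    _ = (∑ u ∈ V, τ u ^ 2) * (2 * (K * (1 + Real.log K))) := (sum_mul ..).symm
    _ ≤ 2 * (K * (1 + Real.log K) ^ 3) * (2 * (K * (1 + Real.log K))) := by gcongr
    _ = 16 * M ^ 2 * (1 + Real.log (2 * M)) ^ 4 := by simp only [K]; push_cast; ring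

theorem sum_card_divisors_mul_sub_mul_le_four_mul (A B : ℕ) :
    ∑ x ∈ (Icc (-A : ℤ) A).erase 0, ∑ y ∈ (Icc (-A : ℤ) A).erase 0,
      ∑ z ∈ (Icc (-B : ℤ) B).erase 0, ∑ w ∈ (Icc (-B : ℤ) B).erase 0,
        (#(x * z - y * w).natAbs.divisors : ℝ)
      ≤ 4 * ∑ u ∈ (Icc (-(A * B : ℕ) : ℤ) (A * B : ℕ)).erase 0,
          ∑ v ∈ (Icc (-(A * B : ℕ) : ℤ) (A * B : ℕ)).erase 0,
            (#u.natAbs.divisors : ℝ) * #v.natAbs.divisors * #(u - v).natAbs.divisors := by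
  set τ : ℤ → ℝ := fun d ↦ #d.natAbs.divisors
  set I₁ := (Icc (-A : ℤ) A).erase 0
  set I₂ := (Icc (-B : ℤ) B).erase 0
  set V := (Icc (-(A * B : ℕ) : ℤ) (A * B : ℕ)).erase 0
  set P := I₁ ×ˢ I₂
  have hmaps : ∀ p ∈ P, p.1 * p.2 ∈ V := by
    intro p hp
    simp only [P, I₁, I₂, V, mem_product, mem_erase, mem_Icc] at hp ⊢
    refine ⟨mul_ne_zero hp.1.1 hp.2.1, ?_⟩
    rw [← abs_le, abs_mul]
    push_cast
    exact mul_le_mul (abs_le.2 hp.1.2) (abs_le.2 hp.2.2) (abs_nonneg _) (by positivity)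
  have hfiber : ∀ u ∈ V, (#{p ∈ P | p.1 * p.2 = u} : ℝ) ≤ 2 * τ u := fun u hu ↦ by
    simp only [τ]
    exact_mod_cast Int.card_filter_mul_eq_le P (mem_erase.1 hu).1
  have hτ : ∀ d, 0 ≤ τ d := fun _ ↦ by positivity
  calc ∑ x ∈ I₁, ∑ y ∈ I₁, ∑ z ∈ I₂, ∑ w ∈ I₂, τ (x * z - y * w)
      = ∑ p ∈ P, ∑ q ∈ P, τ (p.1 * p.2 - q.1 * q.2) := by
        simp only [P, sum_product]
        exact sum_congr rfl fun x _ ↦ sum_comm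
    _ ≤ ∑ p ∈ P, ∑ v ∈ V, 2 * τ v * τ (p.1 * p.2 - v) := by
        gcongr with p
        exact sum_comp_le_sum_mul_of_card_fiber_le hmaps hfiber fun _ _ ↦ hτ _
    _ ≤ ∑ u ∈ V, 2 * τ u * ∑ v ∈ V, 2 * τ v * τ (u - v) :=
        sum_comp_le_sum_mul_of_card_fiber_le (f := fun u ↦ ∑ v ∈ V, 2 * τ v * τ (u - v))
          hmaps hfiber fun _ _ ↦ sum_nonneg fun _ _ ↦ by positivity
    _ = 4 * ∑ u ∈ V, ∑ v ∈ V, τ u * τ v * τ (u - v) := by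
        simp only [mul_sum]
        exact sum_congr rfl fun u _ ↦ sum_congr rfl fun v _ ↦ by ring

theorem sum_ite_le_sum_erase_zero (a b : ℝ) :
    ∑ x ∈ Icc (-(⌈a⌉₊ : ℤ)) ⌈a⌉₊, ∑ y ∈ Icc (-(⌈a⌉₊ : ℤ)) ⌈a⌉₊,
      ∑ z ∈ Icc (-(⌈b⌉₊ : ℤ)) ⌈b⌉₊, ∑ w ∈ Icc (-(⌈b⌉₊ : ℤ)) ⌈b⌉₊,
        (if 1 ≤ |(x : ℝ)| ∧ |(x : ℝ)| ≤ a ∧ 1 ≤ |(y : ℝ)| ∧ |(y : ℝ)| ≤ a ∧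
            1 ≤ |(z : ℝ)| ∧ |(z : ℝ)| ≤ b ∧ 1 ≤ |(w : ℝ)| ∧ |(w : ℝ)| ≤ b ∧
            x * z - y * w ≠ 0
          then ((x * z - y * w).natAbs.divisors.card : ℝ) else 0)
      ≤ ∑ x ∈ (Icc (-(⌈a⌉₊ : ℤ)) ⌈a⌉₊).erase 0, ∑ y ∈ (Icc (-(⌈a⌉₊ : ℤ)) ⌈a⌉₊).erase 0,
          ∑ z ∈ (Icc (-(⌈b⌉₊ : ℤ)) ⌈b⌉₊).erase 0, ∑ w ∈ (Icc (-(⌈b⌉₊ : ℤ)) ⌈b⌉₊).erase 0,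
            (#(x * z - y * w).natAbs.divisors : ℝ) := by
  refine (sum_erase _ (a := 0) ?_).symm.trans_le (sum_le_sum fun x _ ↦ ?_)
  · norm_num
  refine (sum_erase _ (a := 0) ?_).symm.trans_le (sum_le_sum fun y _ ↦ ?_)
  · norm_num
  refine (sum_erase _ (a := 0) ?_).symm.trans_le (sum_le_sum fun z _ ↦ ?_)
  · norm_num
  refine (sum_erase _ (a := 0) ?_).symm.trans_le (sum_le_sum fun w _ ↦ ?_)
  · norm_num
  split_ifs
  exacts [le_rfl, by positivity]

theorem cast_ceil_mul_mul_ceil_mul_le {β s₁ s₂ : ℝ} (hβ : 0 ≤ β) (hs₁ : 1 ≤ s₁) (hs₂ : 1 ≤ s₂) :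
    ((⌈β * s₁⌉₊ * ⌈β * s₂⌉₊ : ℕ) : ℝ) ≤ (β + 1) ^ 2 * (s₁ * s₂) := by
  have h₁ := Nat.ceil_lt_add_one (by positivity : 0 ≤ β * s₁)
  have h₂ := Nat.ceil_lt_add_one (by positivity : 0 ≤ β * s₂)
  push_cast
  calc (⌈β * s₁⌉₊ : ℝ) * ⌈β * s₂⌉₊ ≤ ((β + 1) * s₁) * ((β + 1) * s₂) := by
        gcongr <;> nlinarith
    _ = (β + 1) ^ 2 * (s₁ * s₂) := by ring

theorem one_add_log_mul_le_mul_log_add_two {c t : ℝ} (hc : 1 ≤ c) (ht : 1 ≤ t) :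
    1 + Real.log (c * t) ≤ (2 + Real.log c) * Real.log (t + 2) := by
  have hL : 1 ≤ Real.log (t + 2) := by
    rw [Real.le_log_iff_exp_le (by linarith)]
    linarith [Real.exp_one_lt_d9]
  have ht_le : Real.log t ≤ Real.log (t + 2) := Real.log_le_log (by linarith) (by linarith)
  have hc₀ : 0 ≤ Real.log c := Real.log_nonneg hc
  rw [Real.log_mul (by linarith) (by linarith)]
  nlinarith

open Classical in
/-- Let `β > 0` and `s₁, s₂ ≥ 1`. Then `∑ τ(xz − yw) ≪ s₁²s₂²(log(s₁s₂+2))⁴`, where the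
sum is over integers `x, y` with `1 ≤ |x|, |y| ≤ βs₁` and `z, w` with
`1 ≤ |z|, |w| ≤ βs₂` satisfying `xz − yw ≠ 0`; the implied constant depends only on
`β`. -/
theorem sum_tau_of_minors (β : ℝ) (hβ : 0 < β) :
    ∃ C : ℝ, 0 < C ∧ ∀ s₁ s₂ : ℝ, 1 ≤ s₁ → 1 ≤ s₂ →
      ∑ x ∈ Finset.Icc (-(⌈β * s₁⌉₊ : ℤ)) (⌈β * s₁⌉₊ : ℤ),
        ∑ y ∈ Finset.Icc (-(⌈β * s₁⌉₊ : ℤ)) (⌈β * s₁⌉₊ : ℤ),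
          ∑ z ∈ Finset.Icc (-(⌈β * s₂⌉₊ : ℤ)) (⌈β * s₂⌉₊ : ℤ),
            ∑ w ∈ Finset.Icc (-(⌈β * s₂⌉₊ : ℤ)) (⌈β * s₂⌉₊ : ℤ),
              (if 1 ≤ |(x : ℝ)| ∧ |(x : ℝ)| ≤ β * s₁ ∧ 1 ≤ |(y : ℝ)| ∧ |(y : ℝ)| ≤ β * s₁ ∧
                  1 ≤ |(z : ℝ)| ∧ |(z : ℝ)| ≤ β * s₂ ∧ 1 ≤ |(w : ℝ)| ∧ |(w : ℝ)| ≤ β * s₂ ∧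
                  x * z - y * w ≠ 0
                then ((x * z - y * w).natAbs.divisors.card : ℝ) else 0)
        ≤ C * s₁ ^ 2 * s₂ ^ 2 * (Real.log (s₁ * s₂ + 2)) ^ 4 := by
  set c := 2 * (β + 1) ^ 2
  have hc : 1 ≤ c := by nlinarith
  have hc₀ := Real.log_nonneg hc
  refine ⟨64 * (β + 1) ^ 4 * (2 + Real.log c) ^ 4, by positivity, fun s₁ s₂ hs₁ hs₂ ↦ ?_⟩
  set A := ⌈β * s₁⌉₊
  set B := ⌈β * s₂⌉₊
  have hM_le := cast_ceil_mul_mul_ceil_mul_le hβ.le hs₁ hs₂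
  have hM_pos : (1 : ℝ) ≤ ((A * B : ℕ) : ℝ) := by
    exact_mod_cast Nat.mul_pos (Nat.ceil_pos.2 (by positivity)) (Nat.ceil_pos.2 (by positivity))
  have hlog : 1 + Real.log (2 * ((A * B : ℕ) : ℝ)) ≤ (2 + Real.log c) * Real.log (s₁ * s₂ + 2) :=
    calc _ ≤ 1 + Real.log (c * (s₁ * s₂)) := by gcongr 1 + Real.log ?_; simp only [c]; linarith
      _ ≤ _ := one_add_log_mul_le_mul_log_add_two hc (one_le_mul_of_one_le_of_one_le hs₁ hs₂)
  have hlog₀ : 0 ≤ Real.log (2 * ((A * B : ℕ) : ℝ)) := Real.log_nonneg (by linarith)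
  calc _ ≤ _ := sum_ite_le_sum_erase_zero (β * s₁) (β * s₂)
    _ ≤ _ := sum_card_divisors_mul_sub_mul_le_four_mul A B
    _ ≤ 4 * (16 * ((A * B : ℕ) : ℝ) ^ 2 * (1 + Real.log (2 * ((A * B : ℕ) : ℝ))) ^ 4) := by
        gcongr
        exact sum_sum_card_divisors_mul_mul_sub_le _ (erase_subset _ _)
    _ ≤ 4 * (16 * ((β + 1) ^ 2 * (s₁ * s₂)) ^ 2
          * ((2 + Real.log c) * Real.log (s₁ * s₂ + 2)) ^ 4) := by gcongr
    _ = 64 * (β + 1) ^ 4 * (2 + Real.log c) ^ 4 * s₁ ^ 2 * s₂ ^ 2 * Real.log (s₁ * s₂ + 2) ^ 4 := by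
        ring
end
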